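/- arXiv:1509.05637 — 7 statements merged into one kernel-verified Lean document; each statement's English description precedes it below -/
import Mathlib

section
/- Let a 3SAT instance with n variables and m clauses be given, and let G be the graph constructed from it as described, with source s = u_0 and sink t = v_m. Then the 3SAT instance is satisfiable if and only if G contains a directed path from s to t whose reuse-length is at most n. -/
/-! ## Generic definitions: reuse-length, paths -/

/-- Auxiliary for the reuse-length: `seen` is the list of information values of
earlier edges; an edge contributes its weight only if its information value is new. -/
def reuseLenAux {E I : Type} [DecidableEq I] (w : E → ℕ) (f : E → I) :
    List I → List E → ℕ
  | _, [] => 0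
  | seen, e :: rest =>
      (if f e ∈ seen then 0 else w e) + reuseLenAux w f (f e :: seen) rest

/-- The reuse-length `r(U)` of a list of edges `U`: the sum of `w e` over those
edges `e` of `U` such that no earlier edge `e'` on `U` has `f e' = f e`. -/
def reuseLen {E I : Type} [DecidableEq I] (w : E → ℕ) (f : E → I) (U : List E) : ℕ :=
  reuseLenAux w f [] U

/-- The list of (directed) edges of a path given by its list of vertices. -/
def edgesOf {V : Type} (p : List V) : List (V × V) := p.zip p.tail

/-- `p` is a (simple) directed path from `s` to `t` with respect to adjacency `adj`:
its consecutive vertices are adjacent, its vertices are pairwise distinct,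
it starts at `s` and ends at `t`. -/
def IsPath {V : Type} (adj : V → V → Prop) (s t : V) (p : List V) : Prop :=
  p.Chain' adj ∧ p.Nodup ∧ p.head? = some s ∧ p.getLast? = some t

/-! ## The 3SAT reduction graph
A 3SAT instance with `n` variables `x_0, …, x_{n-1}` and `m` clauses is given by
`C : ℕ → Fin 3 → ℕ × Bool`, where `C j k = (i, b)` means that literal `k` of clause
`C_j` is `x_i` (if `b = true`) resp. `¬ x_i` (if `b = false`); only the values for
`j < m` are relevant, and well-formedness (`i < n`) is a hypothesis of the theorems. -/

/-- The 3SAT instance (first `m` clauses of `C`) is satisfiable. -/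
def Satisfiable (m : ℕ) (C : ℕ → Fin 3 → ℕ × Bool) : Prop :=
  ∃ σ : ℕ → Bool, ∀ j < m, ∃ k : Fin 3, σ (C j k).1 = (C j k).2

/-- Vertices of the 3SAT reduction graph: `u i` is `u_i`, `up i` is `u'_i`,
`un i` is `ū'_i`, `v j` is `v_j` and `vk j k` is `v^k_j`. -/
inductive Vert : Type
  | u : ℕ → Vert
  | up : ℕ → Vert
  | un : ℕ → Vert
  | v : ℕ → Vert
  | vk : ℕ → Fin 3 → Vert
  deriving DecidableEq

/-- The edges of the 3SAT reduction graph for `n` variables and `m` clauses. -/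
def satAdj (n m : ℕ) : Vert → Vert → Prop
  | .u i, .up i' => i' = i ∧ i < n
  | .u i, .un i' => i' = i ∧ i < n
  | .up i, .u i' => i' = i + 1 ∧ i < n
  | .un i, .u i' => i' = i + 1 ∧ i < n
  | .u i, .v j => i = n ∧ j = 0
  | .v j, .vk j' _ => j' = j ∧ j < m
  | .vk j _, .v j' => j' = j + 1 ∧ j < m
  | _, _ => False

/-- Edge weights: the edges `(u_i, u'_i)`, `(u_i, ū'_i)` and `(v_j, v^k_j)`
have weight 1, all other edges have weight 0. -/
def satW : Vert × Vert → ℕ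
  | (.u _, .up _) => 1
  | (.u _, .un _) => 1
  | (.v _, .vk _ _) => 1
  | _ => 0

/-- Edge information values: `pos i` is shared by `(u_i, u'_i)` and all clause edges
whose literal is `x_i`; `neg i` is shared by `(u_i, ū'_i)` and all clause edges whose
literal is `¬ x_i`; all remaining edges get the pairwise distinct fresh value `other e`. -/
inductive Info : Type
  | pos : ℕ → Info
  | neg : ℕ → Info
  | other : Vert × Vert → Info
  deriving DecidableEq

/-- The edge information function of the 3SAT reduction graph. -/
def satF (C : ℕ → Fin 3 → ℕ × Bool) : Vert × Vert → Info
  | (.u i, .up _) => .pos i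
  | (.u i, .un _) => .neg i
  | (.v j, .vk _ k) => if (C j k).2 then .pos (C j k).1 else .neg (C j k).1
  | e => .other e

namespace Stmt0

/-- canonical branch vertex -/
def wv (B : ℕ → Bool) (i : ℕ) : Vert := if B i then .up i else .un i

/-- canonical clause part path from `v j`, with `r` clauses remaining -/
def cT (K : ℕ → Fin 3) : ℕ → ℕ → List Vert
  | 0, j => [.v j]
  | r+1, j => .v j :: .vk j (K j) :: cT K r (j+1)

/-- canonical full path tail from `u i`, with `r` variables remaining -/
def uT (B : ℕ → Bool) (K : ℕ → Fin 3) (m : ℕ) : ℕ → ℕ → List Vert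
  | 0, i => .u i :: cT K m 0
  | r+1, i => .u i :: wv B i :: uT B K m r (i+1)

def clInfo (C : ℕ → Fin 3 → ℕ × Bool) (j : ℕ) (k : Fin 3) : Info :=
  if (C j k).2 then .pos (C j k).1 else .neg (C j k).1

def bInfo (B : ℕ → Bool) (i : ℕ) : Info := if B i then .pos i else .neg i

def good (σ : ℕ → Bool) : Info → Prop
  | .pos i => σ i = true
  | .neg i => σ i = false
  | .other _ => True

lemma cT_cons (K : ℕ → Fin 3) (r j : ℕ) : cT K r j = .v j :: (cT K r j).tail := by
  cases r <;> rfl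

lemma uT_cons (B K m) (r i : ℕ) : uT B K m r i = .u i :: (uT B K m r i).tail := by
  cases r <;> rfl

lemma edgesOf_cons (a b : Vert) (l : List Vert) :
    edgesOf (a :: b :: l) = (a, b) :: edgesOf (b :: l) := rfl

lemma satF_clause (C : ℕ → Fin 3 → ℕ × Bool) (j j' : ℕ) (k : Fin 3) :
    satF C (.v j, .vk j' k) = clInfo C j k := rfl

lemma satF_wv (C : ℕ → Fin 3 → ℕ × Bool) (B : ℕ → Bool) (i : ℕ) :
    satF C (.u i, wv B i) = bInfo B i := by
  unfold wv bInfo; split <;> rfl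

lemma satW_wv (B : ℕ → Bool) (i : ℕ) : satW (.u i, wv B i) = 1 := by
  unfold wv; split <;> rfl

lemma satW_wv' (B : ℕ → Bool) (i i' : ℕ) : satW (wv B i, .u i') = 0 := by
  unfold wv; split <;> rfl

lemma good_clInfo (σ : ℕ → Bool) (C : ℕ → Fin 3 → ℕ × Bool) (j : ℕ) (k : Fin 3) :
    good σ (clInfo C j k) ↔ σ (C j k).1 = (C j k).2 := by
  unfold clInfo
  cases h : (C j k).2 <;> simp [good, h]

lemma clause_aux_zero (C : ℕ → Fin 3 → ℕ × Bool) (K : ℕ → Fin 3) :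
    ∀ r j (S : List Info), (∀ j', j ≤ j' → j' < j + r → clInfo C j' (K j') ∈ S) →
    reuseLenAux satW (satF C) S (edgesOf (cT K r j)) = 0 := by
  intro r
  induction r with
  | zero => intro j S _; rfl
  | succ r ih =>
    intro j S hS
    rw [cT, cT_cons K r (j+1), edgesOf_cons, edgesOf_cons, ← cT_cons]
    rw [reuseLenAux, reuseLenAux]
    have h1 : satF C (Vert.v j, Vert.vk j (K j)) ∈ S := hS j le_rfl (by omega)
    rw [if_pos h1]
    have h2 : reuseLenAux satW (satF C)
        (satF C (Vert.vk j (K j), Vert.v (j+1)) :: satF C (Vert.v j, Vert.vk j (K j)) :: S)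
        (edgesOf (cT K r (j+1))) = 0 := by
      apply ih
      intro j' h1' h2'
      exact List.mem_cons_of_mem _ (List.mem_cons_of_mem _ (hS j' (by omega) (by omega)))
    rw [h2]
    have h3 : satW (Vert.vk j (K j), Vert.v (j+1)) = 0 := rfl
    rw [h3, ite_self]

lemma clause_aux_sat (C : ℕ → Fin 3 → ℕ × Bool) (K : ℕ → Fin 3) (σ : ℕ → Bool) :
    ∀ r j (S : List Info), (∀ g ∈ S, good σ g) →
    reuseLenAux satW (satF C) S (edgesOf (cT K r j)) = 0 →
    ∀ j', j ≤ j' → j' < j + r → σ (C j' (K j')).1 = (C j' (K j')).2 := by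
  intro r
  induction r with
  | zero => intro j S _ _ j' h1 h2; omega
  | succ r ih =>
    intro j S hgood hlen j' h1 h2
    rw [cT, cT_cons K r (j+1), edgesOf_cons, edgesOf_cons, ← cT_cons] at hlen
    rw [reuseLenAux, reuseLenAux] at hlen
    have hmem : satF C (Vert.v j, Vert.vk j (K j)) ∈ S := by
      by_contra hmem
      rw [if_neg hmem] at hlen
      have : satW (Vert.v j, Vert.vk j (K j)) = 1 := rfl
      omega
    have hgj : σ (C j (K j)).1 = (C j (K j)).2 := by
      rw [← good_clInfo σ C j (K j)]
      exact hgood _ (by rw [← satF_clause C j j (K j)]; exact hmem)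
    rcases Nat.eq_or_lt_of_le h1 with rfl | hlt
    · exact hgj
    · rw [if_pos hmem] at hlen
      have hW : satW (Vert.vk j (K j), Vert.v (j+1)) = 0 := rfl
      rw [hW, ite_self] at hlen
      refine ih (j+1) (satF C (Vert.vk j (K j), Vert.v (j+1)) ::
        satF C (Vert.v j, Vert.vk j (K j)) :: S) ?_ (by omega) j' hlt (by omega)
      intro g hg
      rcases List.mem_cons.mp hg with rfl | hg
      · exact trivial
      rcases List.mem_cons.mp hg with rfl | hg
      · rw [satF_clause, good_clInfo]; exact hgj
      · exact hgood _ hg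

lemma var_aux_le (C : ℕ → Fin 3 → ℕ × Bool) (B : ℕ → Bool) (K : ℕ → Fin 3) (m : ℕ) :
    ∀ r i (S : List Info),
    (∀ j, j < m → clInfo C j (K j) ∈ S ∨
      ∃ i', i ≤ i' ∧ i' < i + r ∧ clInfo C j (K j) = bInfo B i') →
    reuseLenAux satW (satF C) S (edgesOf (uT B K m r i)) ≤ r := by
  intro r
  induction r with
  | zero =>
    intro i S hS
    rw [uT, cT_cons K m 0, edgesOf_cons, ← cT_cons, reuseLenAux]
    have h0 : reuseLenAux satW (satF C) (satF C (Vert.u i, Vert.v 0) :: S)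
        (edgesOf (cT K m 0)) = 0 := by
      apply clause_aux_zero
      intro j' _ h2
      rcases hS j' (by omega) with h | ⟨i', _, h2', _⟩
      · exact List.mem_cons_of_mem _ h
      · omega
    rw [h0]
    have : satW (Vert.u i, Vert.v 0) = 0 := rfl
    simp [this]
  | succ r ih =>
    intro i S hS
    rw [uT, uT_cons B K m r (i+1), edgesOf_cons, edgesOf_cons, ← uT_cons,
      reuseLenAux, reuseLenAux]
    have hle : reuseLenAux satW (satF C)
        (satF C (wv B i, Vert.u (i+1)) :: satF C (Vert.u i, wv B i) :: S)
        (edgesOf (uT B K m r (i+1))) ≤ r := by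
      apply ih
      intro j hj
      rcases hS j hj with h | ⟨i', h1, h2, h3⟩
      · exact Or.inl (List.mem_cons_of_mem _ (List.mem_cons_of_mem _ h))
      · rcases Nat.eq_or_lt_of_le h1 with heq | hlt
        · left
          rw [h3, ← heq, ← satF_wv C B i]
          exact List.mem_cons_of_mem _ List.mem_cons_self
        · exact Or.inr ⟨i', hlt, by omega, h3⟩
    rw [satW_wv B i, satW_wv' B i (i+1), ite_self]
    have h1 : (if satF C (Vert.u i, wv B i) ∈ S then 0 else 1) ≤ 1 := by
      split <;> omega
    omega

lemma var_aux_sat (C : ℕ → Fin 3 → ℕ × Bool) (B : ℕ → Bool) (K : ℕ → Fin 3) (m : ℕ) :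
    ∀ r i (S : List Info), (∀ g ∈ S, good B g) →
    (∀ i', i ≤ i' → Info.pos i' ∉ S ∧ Info.neg i' ∉ S) →
    reuseLenAux satW (satF C) S (edgesOf (uT B K m r i)) ≤ r →
    ∀ j, j < m → B (C j (K j)).1 = (C j (K j)).2 := by
  intro r
  induction r with
  | zero =>
    intro i S hgood _ hlen j hj
    rw [uT, cT_cons K m 0, edgesOf_cons, ← cT_cons, reuseLenAux] at hlen
    have hw : satW (Vert.u i, Vert.v 0) = 0 := rfl
    have h0 : reuseLenAux satW (satF C) (satF C (Vert.u i, Vert.v 0) :: S)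
        (edgesOf (cT K m 0)) = 0 := by omega
    refine clause_aux_sat C K B m 0 _ ?_ h0 j (by omega) (by omega)
    intro g hg
    rcases List.mem_cons.mp hg with rfl | hg
    · exact trivial
    · exact hgood _ hg
  | succ r ih =>
    intro i S hgood hfresh hlen j hj
    rw [uT, uT_cons B K m r (i+1), edgesOf_cons, edgesOf_cons, ← uT_cons,
      reuseLenAux, reuseLenAux] at hlen
    have hnotmem : satF C (Vert.u i, wv B i) ∉ S := by
      rw [satF_wv]
      unfold bInfo
      rcases hfresh i le_rfl with ⟨h1, h2⟩
      split <;> assumption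
    rw [if_neg hnotmem, satW_wv] at hlen
    have hw2 : satW (wv B i, Vert.u (i+1)) = 0 := satW_wv' B i (i+1)
    rw [hw2, ite_self] at hlen
    refine ih (i+1) (satF C (wv B i, Vert.u (i+1)) ::
      satF C (Vert.u i, wv B i) :: S) ?_ ?_ (by omega) j hj
    · intro g hg
      rcases List.mem_cons.mp hg with rfl | hg
      · unfold wv; split <;> exact trivial
      rcases List.mem_cons.mp hg with rfl | hg
      · rw [satF_wv]
        unfold bInfo good
        cases h : B i <;> simp [h]
      · exact hgood _ hg
    · intro i' hi'
      rcases hfresh i' (by omega) with ⟨h1, h2⟩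
      have hne : ∀ x : Info, x = Info.pos i' ∨ x = Info.neg i' →
          satF C (wv B i, Vert.u (i+1)) ≠ x ∧ satF C (Vert.u i, wv B i) ≠ x := by
        intro x hx
        constructor
        · unfold wv; split <;> rcases hx with rfl | rfl <;> simp [satF]
        · rw [satF_wv]; unfold bInfo; split <;> rcases hx with rfl | rfl <;>
            simp <;> omega
      constructor
      · intro hmem
        rcases List.mem_cons.mp hmem with heq | hmem
        · exact (hne _ (Or.inl rfl)).1 heq.symm
        rcases List.mem_cons.mp hmem with heq | hmem
        · exact (hne _ (Or.inl rfl)).2 heq.symm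
        · exact h1 hmem
      · intro hmem
        rcases List.mem_cons.mp hmem with heq | hmem
        · exact (hne _ (Or.inr rfl)).1 heq.symm
        rcases List.mem_cons.mp hmem with heq | hmem
        · exact (hne _ (Or.inr rfl)).2 heq.symm
        · exact h2 hmem

lemma cT_congr (K K' : ℕ → Fin 3) : ∀ r j, (∀ j', j ≤ j' → j' < j + r → K j' = K' j') →
    cT K r j = cT K' r j := by
  intro r
  induction r with
  | zero => intro j _; rfl
  | succ r ih =>
    intro j h
    rw [cT, cT, h j le_rfl (by omega), ih (j+1) fun j' h1 h2 => h j' (by omega) (by omega)]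

lemma uT_congr (B B' : ℕ → Bool) (K : ℕ → Fin 3) (m : ℕ) :
    ∀ r i, (∀ i', i ≤ i' → i' < i + r → B i' = B' i') → uT B K m r i = uT B' K m r i := by
  intro r
  induction r with
  | zero => intro i _; rfl
  | succ r ih =>
    intro i h
    rw [uT, uT, ih (i+1) fun i' h1 h2 => h i' (by omega) (by omega)]
    unfold wv
    rw [h i le_rfl (by omega)]

lemma mem_cT (K : ℕ → Fin 3) : ∀ r j x, x ∈ cT K r j →
    (∃ j', j ≤ j' ∧ j' ≤ j + r ∧ x = .v j') ∨
    (∃ j' k, j ≤ j' ∧ j' < j + r ∧ x = .vk j' k) := by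
  intro r
  induction r with
  | zero =>
    intro j x hx
    rw [cT, List.mem_singleton] at hx
    exact Or.inl ⟨j, le_rfl, by omega, hx⟩
  | succ r ih =>
    intro j x hx
    rw [cT, List.mem_cons, List.mem_cons] at hx
    rcases hx with rfl | rfl | hx
    · exact Or.inl ⟨j, le_rfl, by omega, rfl⟩
    · exact Or.inr ⟨j, K j, le_rfl, by omega, rfl⟩
    · rcases ih (j+1) x hx with ⟨j', h1, h2, h3⟩ | ⟨j', k, h1, h2, h3⟩
      · exact Or.inl ⟨j', by omega, by omega, h3⟩
      · exact Or.inr ⟨j', k, by omega, by omega, h3⟩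

lemma nodup_cT (K : ℕ → Fin 3) : ∀ r j, (cT K r j).Nodup := by
  intro r
  induction r with
  | zero => intro j; simp [cT]
  | succ r ih =>
    intro j
    rw [cT, List.nodup_cons, List.nodup_cons]
    refine ⟨?_, ?_, ih (j+1)⟩
    · rw [List.mem_cons]
      rintro (h | h)
      · exact absurd h (by simp)
      · rcases mem_cT K r (j+1) _ h with ⟨j', h1, _, h3⟩ | ⟨j', k, h1, _, h3⟩
        · simp only [Vert.v.injEq] at h3; omega
        · exact absurd h3 (by simp)
    · intro h
      rcases mem_cT K r (j+1) _ h with ⟨j', h1, _, h3⟩ | ⟨j', k, h1, _, h3⟩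
      · exact absurd h3 (by simp)
      · simp only [Vert.vk.injEq] at h3; omega

lemma mem_uT (B : ℕ → Bool) (K : ℕ → Fin 3) (m : ℕ) : ∀ r i x, x ∈ uT B K m r i →
    (∃ i', i ≤ i' ∧ i' ≤ i + r ∧ x = .u i') ∨
    (∃ i', i ≤ i' ∧ i' < i + r ∧ (x = .up i' ∨ x = .un i')) ∨ x ∈ cT K m 0 := by
  intro r
  induction r with
  | zero =>
    intro i x hx
    rw [uT, List.mem_cons] at hx
    rcases hx with rfl | hx
    · exact Or.inl ⟨i, le_rfl, le_rfl, rfl⟩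
    · exact Or.inr (Or.inr hx)
  | succ r ih =>
    intro i x hx
    rw [uT, List.mem_cons, List.mem_cons] at hx
    rcases hx with rfl | rfl | hx
    · exact Or.inl ⟨i, le_rfl, by omega, rfl⟩
    · refine Or.inr (Or.inl ⟨i, le_rfl, by omega, ?_⟩)
      unfold wv; split
      · exact Or.inl rfl
      · exact Or.inr rfl
    · rcases ih (i+1) x hx with ⟨i', h1, h2, h3⟩ | ⟨i', h1, h2, h3⟩ | h
      · exact Or.inl ⟨i', by omega, by omega, h3⟩
      · exact Or.inr (Or.inl ⟨i', by omega, by omega, h3⟩)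
      · exact Or.inr (Or.inr h)

lemma nodup_uT (B : ℕ → Bool) (K : ℕ → Fin 3) (m : ℕ) : ∀ r i, (uT B K m r i).Nodup := by
  intro r
  induction r with
  | zero =>
    intro i
    rw [uT, List.nodup_cons]
    refine ⟨?_, nodup_cT K m 0⟩
    intro h
    rcases mem_cT K m 0 _ h with ⟨j', _, _, h3⟩ | ⟨j', k, _, _, h3⟩ <;>
      exact absurd h3 (by simp)
  | succ r ih =>
    intro i
    rw [uT, List.nodup_cons, List.nodup_cons]
    refine ⟨?_, ?_, ih (i+1)⟩
    · rw [List.mem_cons]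
      rintro (h | h)
      · unfold wv at h; split at h <;> exact absurd h (by simp)
      · rcases mem_uT B K m r (i+1) _ h with ⟨i', h1, _, h3⟩ | ⟨i', h1, _, h3 | h3⟩ | h'
        · simp only [Vert.u.injEq] at h3; omega
        · exact absurd h3 (by simp)
        · exact absurd h3 (by simp)
        · rcases mem_cT K m 0 _ h' with ⟨j', _, _, h3⟩ | ⟨j', k, _, _, h3⟩ <;>
            exact absurd h3 (by simp)
    · intro h
      unfold wv at h
      split at h <;>
        rcases mem_uT B K m r (i+1) _ h with ⟨i', h1, _, h3⟩ | ⟨i', h1, _, h3 | h3⟩ | h'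
      · exact absurd h3 (by simp)
      · simp only [Vert.up.injEq] at h3; omega
      · exact absurd h3 (by simp)
      · rcases mem_cT K m 0 _ h' with ⟨j', _, _, h3⟩ | ⟨j', k, _, _, h3⟩ <;>
          exact absurd h3 (by simp)
      · exact absurd h3 (by simp)
      · exact absurd h3 (by simp)
      · simp only [Vert.un.injEq] at h3; omega
      · rcases mem_cT K m 0 _ h' with ⟨j', _, _, h3⟩ | ⟨j', k, _, _, h3⟩ <;>
          exact absurd h3 (by simp)

lemma chain'_cT (n m : ℕ) (K : ℕ → Fin 3) : ∀ r j, j + r = m →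
    List.Chain' (satAdj n m) (cT K r j) := by
  intro r
  induction r with
  | zero => intro j _; simp [cT, List.Chain', List.isChain_singleton]
  | succ r ih =>
    intro j hj
    rw [cT, List.Chain', List.isChain_cons_cons, cT_cons K r (j+1), List.isChain_cons_cons, ← cT_cons K r (j+1)]
    exact ⟨⟨rfl, by omega⟩, ⟨rfl, by omega⟩, ih (j+1) (by omega)⟩

lemma chain'_uT (n m : ℕ) (B : ℕ → Bool) (K : ℕ → Fin 3) : ∀ r i, i + r = n →
    List.Chain' (satAdj n m) (uT B K m r i) := by
  intro r
  induction r with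
  | zero =>
    intro i hi
    rw [uT, cT_cons K m 0, List.Chain', List.isChain_cons_cons, ← cT_cons K m 0]
    exact ⟨⟨by omega, rfl⟩, chain'_cT n m K m 0 (by omega)⟩
  | succ r ih =>
    intro i hi
    rw [uT, List.Chain', List.isChain_cons_cons, uT_cons B K m r (i+1), List.isChain_cons_cons,
      ← uT_cons B K m r (i+1)]
    refine ⟨?_, ?_, ih (i+1) (by omega)⟩
    · unfold wv; split <;> exact ⟨rfl, by omega⟩
    · unfold wv; split <;> exact ⟨rfl, by omega⟩

lemma getLast?_cT (K : ℕ → Fin 3) : ∀ r j, (cT K r j).getLast? = some (.v (j + r)) := by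
  intro r
  induction r with
  | zero => intro j; simp [cT]
  | succ r ih =>
    intro j
    rw [cT, List.getLast?_cons_cons, cT_cons K r (j+1), List.getLast?_cons_cons,
      ← cT_cons K r (j+1), ih (j+1)]
    congr 2
    omega

lemma getLast?_uT (B : ℕ → Bool) (K : ℕ → Fin 3) (m : ℕ) :
    ∀ r i, (uT B K m r i).getLast? = some (.v m) := by
  intro r
  induction r with
  | zero =>
    intro i
    rw [uT, cT_cons K m 0, List.getLast?_cons_cons, ← cT_cons K m 0, getLast?_cT]
    simp
  | succ r ih =>
    intro i
    rw [uT, List.getLast?_cons_cons, uT_cons B K m r (i+1), List.getLast?_cons_cons,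
      ← uT_cons B K m r (i+1), ih (i+1)]

lemma shape_v (n m : ℕ) : ∀ r j (q : List Vert), m - j = r →
    q.Chain' (satAdj n m) → q.head? = some (.v j) → q.getLast? = some (.v m) →
    ∃ K, q = cT K r j := by
  intro r
  induction r with
  | zero =>
    intro j q hr hch hhd hlast
    match q, hhd with
    | x :: t, hhd =>
      rw [List.head?_cons, Option.some_inj] at hhd
      subst hhd
      match t with
      | [] => exact ⟨fun _ => 0, rfl⟩
      | b :: t' =>
        rw [List.Chain', List.isChain_cons_cons] at hch
        have hadj := hch.1
        match b with
        | .u _ | .up _ | .un _ | .v _ => exact hadj.elim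
        | .vk j' k =>
          have : j' = j ∧ j < m := hadj
          omega
  | succ r ih =>
    intro j q hr hch hhd hlast
    match q, hhd with
    | x :: t, hhd =>
      rw [List.head?_cons, Option.some_inj] at hhd
      subst hhd
      match t with
      | [] =>
        simp only [List.getLast?_singleton, Option.some_inj, Vert.v.injEq] at hlast
        omega
      | b :: t' =>
        rw [List.Chain', List.isChain_cons_cons] at hch
        obtain ⟨hadj, hch⟩ := hch
        match b with
        | .u _ | .up _ | .un _ | .v _ => exact hadj.elim
        | .vk j' k =>
          have hjm : j < m := (hadj : j' = j ∧ j < m).2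
          have heq : j = j' := (hadj : j' = j ∧ j < m).1.symm
          subst heq
          match t' with
          | [] => simp at hlast
          | c :: t'' =>
            rw [List.isChain_cons_cons] at hch
            obtain ⟨hadj2, hch⟩ := hch
            match c with
            | .u _ | .up _ | .un _ | .vk _ _ => exact hadj2.elim
            | .v j'' =>
              obtain ⟨rfl, -⟩ : j'' = j + 1 ∧ j < m := hadj2
              rw [List.getLast?_cons_cons, List.getLast?_cons_cons] at hlast
              obtain ⟨K', heq⟩ := ih (j+1) (Vert.v (j+1) :: t'') (by omega) hch rfl hlast
              refine ⟨Function.update K' j k, ?_⟩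
              rw [cT, Function.update_self, heq,
                cT_congr (Function.update K' j k) K' r (j+1)
                  fun j' h1 _ => Function.update_of_ne (by omega) _ _]

lemma shape_u (n m : ℕ) : ∀ r i (p : List Vert), n - i = r →
    p.Chain' (satAdj n m) → p.head? = some (.u i) → p.getLast? = some (.v m) →
    ∃ B K, p = uT B K m r i := by
  intro r
  induction r with
  | zero =>
    intro i p hr hch hhd hlast
    match p, hhd with
    | x :: t, hhd =>
      rw [List.head?_cons, Option.some_inj] at hhd
      subst hhd
      match t with
      | [] => simp at hlast
      | b :: t' =>
        rw [List.Chain', List.isChain_cons_cons] at hch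
        obtain ⟨hadj, hch⟩ := hch
        match b with
        | .u _ | .vk _ _ => exact hadj.elim
        | .up i' => obtain ⟨-, h⟩ : i' = i ∧ i < n := hadj; omega
        | .un i' => obtain ⟨-, h⟩ : i' = i ∧ i < n := hadj; omega
        | .v j =>
          have h2 : j = 0 := (hadj : i = n ∧ j = 0).2
          subst h2
          rw [List.getLast?_cons_cons] at hlast
          obtain ⟨K, heq⟩ := shape_v n m m 0 (Vert.v 0 :: t') (by omega) hch rfl hlast
          exact ⟨fun _ => true, K, by rw [uT, heq]⟩
  | succ r ih =>
    intro i p hr hch hhd hlast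
    match p, hhd with
    | x :: t, hhd =>
      rw [List.head?_cons, Option.some_inj] at hhd
      subst hhd
      match t with
      | [] => simp at hlast
      | b :: t' =>
        rw [List.Chain', List.isChain_cons_cons] at hch
        obtain ⟨hadj, hch⟩ := hch
        match b with
        | .u _ | .vk _ _ => exact hadj.elim
        | .v j => obtain ⟨rfl, -⟩ : i = n ∧ j = 0 := hadj; omega
        | .up i' =>
          have heq : i = i' := (hadj : i' = i ∧ i < n).1.symm
          subst heq
          match t' with
          | [] => simp at hlast
          | c :: t'' =>
            rw [List.isChain_cons_cons] at hch
            obtain ⟨hadj2, hch⟩ := hch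
            match c with
            | .up _ | .un _ | .v _ | .vk _ _ => exact hadj2.elim
            | .u i'' =>
              obtain ⟨rfl, -⟩ : i'' = i + 1 ∧ i < n := hadj2
              rw [List.getLast?_cons_cons, List.getLast?_cons_cons] at hlast
              obtain ⟨B', K, heq⟩ := ih (i+1) (Vert.u (i+1) :: t'') (by omega) hch rfl hlast
              refine ⟨Function.update B' i true, K, ?_⟩
              rw [uT, heq, uT_congr (Function.update B' i true) B' K m r (i+1)
                fun i' h1 _ => Function.update_of_ne (by omega) _ _]
              unfold wv
              rw [Function.update_self]
              simp
        | .un i' =>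
          have heq : i = i' := (hadj : i' = i ∧ i < n).1.symm
          subst heq
          match t' with
          | [] => simp at hlast
          | c :: t'' =>
            rw [List.isChain_cons_cons] at hch
            obtain ⟨hadj2, hch⟩ := hch
            match c with
            | .up _ | .un _ | .v _ | .vk _ _ => exact hadj2.elim
            | .u i'' =>
              obtain ⟨rfl, -⟩ : i'' = i + 1 ∧ i < n := hadj2
              rw [List.getLast?_cons_cons, List.getLast?_cons_cons] at hlast
              obtain ⟨B', K, heq⟩ := ih (i+1) (Vert.u (i+1) :: t'') (by omega) hch rfl hlast
              refine ⟨Function.update B' i false, K, ?_⟩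
              rw [uT, heq, uT_congr (Function.update B' i false) B' K m r (i+1)
                fun i' h1 _ => Function.update_of_ne (by omega) _ _]
              unfold wv
              rw [Function.update_self]
              simp

lemma clInfo_eq_bInfo (σ : ℕ → Bool) (C : ℕ → Fin 3 → ℕ × Bool) (j : ℕ) (k : Fin 3)
    (h : σ (C j k).1 = (C j k).2) : clInfo C j k = bInfo σ (C j k).1 := by
  unfold clInfo bInfo
  rw [h]

end Stmt0

/-- The 3SAT instance is satisfiable iff the reduction graph contains
a directed path from `s = u_0` to `t = v_m` of reuse-length at most `n`. -/
theorem stmt_0 (n m : ℕ) (C : ℕ → Fin 3 → ℕ × Bool)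
    (hC : ∀ j < m, ∀ k : Fin 3, (C j k).1 < n) :
    Satisfiable m C ↔
      ∃ p : List Vert, IsPath (satAdj n m) (.u 0) (.v m) p ∧
        reuseLen satW (satF C) (edgesOf p) ≤ n := by
  constructor
  · rintro ⟨σ, hσ⟩
    classical
    let K : ℕ → Fin 3 := fun j => if h : j < m then (hσ j h).choose else 0
    refine ⟨Stmt0.uT σ K m n 0, ⟨Stmt0.chain'_uT n m σ K n 0 (by omega),
      Stmt0.nodup_uT σ K m n 0, ?_, Stmt0.getLast?_uT σ K m n 0⟩, ?_⟩
    · rw [Stmt0.uT_cons σ K m n 0]; rfl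
    · unfold reuseLen
      apply Stmt0.var_aux_le
      intro j hj
      right
      have hKj : K j = (hσ j hj).choose := dif_pos hj
      have hs : σ (C j (K j)).1 = (C j (K j)).2 := by
        rw [hKj]; exact (hσ j hj).choose_spec
      exact ⟨(C j (K j)).1, Nat.zero_le _, by have := hC j hj (K j); omega,
        Stmt0.clInfo_eq_bInfo σ C j (K j) hs⟩
  · rintro ⟨p, ⟨hch, hnd, hhd, hlast⟩, hlen⟩
    obtain ⟨B, K, rfl⟩ := Stmt0.shape_u n m n 0 p (by omega) hch hhd hlast
    exact ⟨B, fun j hj =>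
      ⟨K j, Stmt0.var_aux_sat C B K m n 0 [] (by simp) (by simp) hlen j hj⟩⟩
end

section
/- Let a 3SAT instance with n variables and m clauses be given, and let G be the graph constructed from it as described, with source s = u_0 and sink t = v_m. If the 3SAT instance is satisfiable, then G contains a directed path from s to t whose reuse-length is exactly n. -/
/-! ### Auxiliary constructions for the proof -/

/-- The information value of the variable edge chosen according to assignment `σ`. -/
def lit (σ : ℕ → Bool) (i : ℕ) : Info := if σ i then .pos i else .neg i

/-- The clause part of the chosen path: from `v j` through `d` clause gadgets. -/
def cpath (K : ℕ → Fin 3) : ℕ → ℕ → List Vert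
  | j, 0 => [.v j]
  | j, d+1 => .v j :: .vk j (K j) :: cpath K (j+1) d

/-- The full chosen path starting at `u i`, through `d` variable gadgets,
then through all `m` clause gadgets. -/
def vpath (σ : ℕ → Bool) (K : ℕ → Fin 3) (m : ℕ) : ℕ → ℕ → List Vert
  | i, 0 => .u i :: cpath K 0 m
  | i, d+1 => .u i :: (if σ i then Vert.up i else Vert.un i) :: vpath σ K m (i+1) d

/-- A rank function which is strictly increasing along the chosen path. -/
def rank (n : ℕ) : Vert → ℕ
  | .u i => 2*i
  | .up i => 2*i+1
  | .un i => 2*i+1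
  | .v j => 2*n+1+2*j
  | .vk j _ => 2*n+2+2*j

lemma cpath_cons (K : ℕ → Fin 3) (j d : ℕ) :
    cpath K j d = .v j :: (cpath K j d).tail := by cases d <;> rfl

lemma vpath_cons (σ : ℕ → Bool) (K : ℕ → Fin 3) (m i d : ℕ) :
    vpath σ K m i d = .u i :: (vpath σ K m i d).tail := by cases d <;> rfl

lemma cpath_head (K : ℕ → Fin 3) (j d : ℕ) :
    (cpath K j d).head? = some (.v j) := by cases d <;> rfl

lemma vpath_head (σ : ℕ → Bool) (K : ℕ → Fin 3) (m i d : ℕ) :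
    (vpath σ K m i d).head? = some (.u i) := by cases d <;> rfl

lemma edgesOf_head {V : Type} (a b : V) (l : List V) (h : l.head? = some b) :
    edgesOf (a :: l) = (a, b) :: edgesOf l := by
  cases l with
  | nil => simp at h
  | cons c t =>
    simp only [List.head?_cons, Option.some.injEq] at h
    subst h; rfl

lemma cpath_last (K : ℕ → Fin 3) : ∀ d j, (cpath K j d).getLast? = some (.v (j + d)) := by
  intro d
  induction d with
  | zero => intro j; rfl
  | succ d ih =>
    intro j
    show (Vert.v j :: Vert.vk j (K j) :: cpath K (j+1) d).getLast? = _
    rw [List.getLast?_cons_cons, cpath_cons K (j+1) d, List.getLast?_cons_cons,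
        ← cpath_cons, ih, show j + 1 + d = j + (d + 1) by omega]

lemma vpath_last (σ : ℕ → Bool) (K : ℕ → Fin 3) (m : ℕ) :
    ∀ d i, (vpath σ K m i d).getLast? = some (.v m) := by
  intro d
  induction d with
  | zero =>
    intro i
    show (Vert.u i :: cpath K 0 m).getLast? = _
    rw [cpath_cons, List.getLast?_cons_cons, ← cpath_cons, cpath_last]
    simp
  | succ d ih =>
    intro i
    show (Vert.u i :: (if σ i then Vert.up i else Vert.un i) :: vpath σ K m (i+1) d).getLast? = _
    rw [List.getLast?_cons_cons, vpath_cons, List.getLast?_cons_cons, ← vpath_cons, ih]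

lemma cpath_chain (n m : ℕ) (K : ℕ → Fin 3) :
    ∀ d j, j + d = m → List.Chain' (satAdj n m) (cpath K j d) := by
  intro d
  induction d with
  | zero => intro j _; exact List.isChain_singleton _
  | succ d ih =>
    intro j hj
    show List.Chain' (satAdj n m) (Vert.v j :: Vert.vk j (K j) :: cpath K (j+1) d)
    rw [List.Chain', List.isChain_cons_cons, List.isChain_cons]
    refine ⟨⟨rfl, by omega⟩, fun b hb => ?_, ih (j+1) (by omega)⟩
    rw [cpath_head] at hb
    cases hb
    exact ⟨rfl, by omega⟩

lemma vpath_chain (n m : ℕ) (σ : ℕ → Bool) (K : ℕ → Fin 3) :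
    ∀ d i, i + d = n → List.Chain' (satAdj n m) (vpath σ K m i d) := by
  intro d
  induction d with
  | zero =>
    intro i hi
    show List.Chain' (satAdj n m) (Vert.u i :: cpath K 0 m)
    rw [List.Chain', List.isChain_cons]
    refine ⟨fun b hb => ?_, cpath_chain n m K m 0 (by omega)⟩
    rw [cpath_head] at hb
    cases hb
    exact ⟨by omega, rfl⟩
  | succ d ih =>
    intro i hi
    show List.Chain' (satAdj n m)
      (Vert.u i :: (if σ i then Vert.up i else Vert.un i) :: vpath σ K m (i+1) d)
    rw [List.Chain', List.isChain_cons_cons, List.isChain_cons]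
    refine ⟨?_, fun b hb => ?_, ih (i+1) (by omega)⟩
    · split <;> exact ⟨rfl, by omega⟩
    · rw [vpath_head] at hb
      cases hb
      split <;> exact ⟨rfl, by omega⟩

lemma cpath_rank (n : ℕ) (K : ℕ → Fin 3) :
    ∀ d j, List.Chain' (fun a b => rank n a < rank n b) (cpath K j d) := by
  intro d
  induction d with
  | zero => intro j; exact List.isChain_singleton _
  | succ d ih =>
    intro j
    show List.Chain' _ (Vert.v j :: Vert.vk j (K j) :: cpath K (j+1) d)
    rw [List.Chain', List.isChain_cons_cons, List.isChain_cons]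
    refine ⟨by simp [rank], fun b hb => ?_, ih (j+1)⟩
    rw [cpath_head] at hb
    cases hb
    simp only [rank]; omega

lemma vpath_rank (n m : ℕ) (σ : ℕ → Bool) (K : ℕ → Fin 3) :
    ∀ d i, i + d = n → List.Chain' (fun a b => rank n a < rank n b) (vpath σ K m i d) := by
  intro d
  induction d with
  | zero =>
    intro i hi
    show List.Chain' _ (Vert.u i :: cpath K 0 m)
    rw [List.Chain', List.isChain_cons]
    refine ⟨fun b hb => ?_, cpath_rank n K m 0⟩
    rw [cpath_head] at hb
    cases hb
    simp only [rank]; omega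
  | succ d ih =>
    intro i hi
    show List.Chain' _
      (Vert.u i :: (if σ i then Vert.up i else Vert.un i) :: vpath σ K m (i+1) d)
    rw [List.Chain', List.isChain_cons_cons, List.isChain_cons]
    refine ⟨?_, fun b hb => ?_, ih (i+1) (by omega)⟩
    · split <;> (simp only [rank]; omega)
    · rw [vpath_head] at hb
      cases hb
      split <;> (simp only [rank]; omega)

lemma lit_ne_other (σ : ℕ → Bool) (i : ℕ) (e : Vert × Vert) : lit σ i ≠ .other e := by
  unfold lit; split <;> simp

lemma lit_ne_lit (σ : ℕ → Bool) {i i' : ℕ} (h : i ≠ i') : lit σ i ≠ lit σ i' := by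
  unfold lit; split <;> split <;> simp [h]

lemma clause_reuse (C : ℕ → Fin 3 → ℕ × Bool) (K : ℕ → Fin 3) :
    ∀ d j (seen : List Info),
      (∀ j', j ≤ j' → j' < j + d → satF C (.v j', .vk j' (K j')) ∈ seen) →
      reuseLenAux satW (satF C) seen (edgesOf (cpath K j d)) = 0 := by
  intro d
  induction d with
  | zero => intro j seen _; rfl
  | succ d ih =>
    intro j seen H
    show reuseLenAux satW (satF C) seen
      (edgesOf (Vert.v j :: Vert.vk j (K j) :: cpath K (j+1) d)) = 0
    rw [show edgesOf (Vert.v j :: Vert.vk j (K j) :: cpath K (j+1) d)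
          = (Vert.v j, Vert.vk j (K j)) :: edgesOf (Vert.vk j (K j) :: cpath K (j+1) d) from rfl,
        edgesOf_head _ _ _ (cpath_head K (j+1) d)]
    have h1 : satF C (Vert.v j, Vert.vk j (K j)) ∈ seen := H j le_rfl (by omega)
    have h2 : satW (Vert.vk j (K j), Vert.v (j+1)) = 0 := rfl
    have h3 := ih (j+1) (satF C (Vert.vk j (K j), Vert.v (j+1))
        :: satF C (Vert.v j, Vert.vk j (K j)) :: seen) (fun j' hj1 hj2 =>
      List.mem_cons_of_mem _ (List.mem_cons_of_mem _ (H j' (by omega) (by omega))))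
    simp only [reuseLenAux, if_pos h1, h2, ite_self, h3]

lemma var_reuse (n m : ℕ) (C : ℕ → Fin 3 → ℕ × Bool) (σ : ℕ → Bool) (K : ℕ → Fin 3)
    (hm : ∀ j, j < m → satF C (.v j, .vk j (K j)) = lit σ (C j (K j)).1 ∧ (C j (K j)).1 < n) :
    ∀ d i (seen : List Info), i + d = n →
      (∀ i', i ≤ i' → lit σ i' ∉ seen) →
      (∀ i', i' < i → lit σ i' ∈ seen) →
      reuseLenAux satW (satF C) seen (edgesOf (vpath σ K m i d)) = d := by
  intro d
  induction d with
  | zero =>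
    intro i seen hi _ hlt
    show reuseLenAux satW (satF C) seen (edgesOf (Vert.u i :: cpath K 0 m)) = 0
    rw [edgesOf_head _ _ _ (cpath_head K 0 m)]
    have hw : satW (Vert.u i, Vert.v 0) = 0 := rfl
    simp only [reuseLenAux, hw, ite_self, Nat.zero_add]
    exact clause_reuse C K m 0 _ (fun j' _ hj2 => by
      have h5 := (hm j' (by omega)).2
      rw [(hm j' (by omega)).1]
      exact List.mem_cons_of_mem _ (hlt _ (by omega)))
  | succ d ih =>
    intro i seen hi hge hlt
    set w : Vert := if σ i then Vert.up i else Vert.un i with hw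
    show reuseLenAux satW (satF C) seen (edgesOf (Vert.u i :: w :: vpath σ K m (i+1) d)) = d + 1
    rw [show edgesOf (Vert.u i :: w :: vpath σ K m (i+1) d)
          = (Vert.u i, w) :: edgesOf (w :: vpath σ K m (i+1) d) from rfl,
        edgesOf_head _ _ _ (vpath_head σ K m (i+1) d)]
    have hF : satF C (Vert.u i, w) = lit σ i := by
      rw [hw]; unfold lit; split <;> rfl
    have hW : satW (Vert.u i, w) = 1 := by
      rw [hw]; split <;> rfl
    have hF2 : satF C (w, Vert.u (i+1)) = .other (w, Vert.u (i+1)) := by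
      rw [hw]; split <;> rfl
    have hW2 : satW (w, Vert.u (i+1)) = 0 := by
      rw [hw]; split <;> rfl
    have h1 : ∀ i', i + 1 ≤ i' → lit σ i' ∉ satF C (w, Vert.u (i+1)) :: lit σ i :: seen := by
      intro i' hi'
      rw [hF2]
      simp only [List.mem_cons, not_or]
      exact ⟨lit_ne_other σ i' _, lit_ne_lit σ (by omega), hge i' (by omega)⟩
    have h2m : ∀ i', i' < i + 1 → lit σ i' ∈ satF C (w, Vert.u (i+1)) :: lit σ i :: seen := by
      intro i' hi'
      rcases Nat.lt_or_ge i' i with h | h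
      · exact List.mem_cons_of_mem _ (List.mem_cons_of_mem _ (hlt i' h))
      · have he : i' = i := by omega
        subst he
        exact List.mem_cons_of_mem _ List.mem_cons_self
    have h3 := ih (i+1) (satF C (w, Vert.u (i+1)) :: lit σ i :: seen) (by omega) h1 h2m
    simp only [reuseLenAux, hF, hW, hW2, ite_self, if_neg (hge i le_rfl), h3]
    omega

/-- If the 3SAT instance is satisfiable, then the reduction graph
contains a directed path from `s = u_0` to `t = v_m` of reuse-length exactly `n`. -/
theorem stmt_1 (n m : ℕ) (C : ℕ → Fin 3 → ℕ × Bool)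
    (hC : ∀ j < m, ∀ k : Fin 3, (C j k).1 < n)
    (hsat : Satisfiable m C) :
    ∃ p : List Vert, IsPath (satAdj n m) (.u 0) (.v m) p ∧
      reuseLen satW (satF C) (edgesOf p) = n := by
  classical
  obtain ⟨σ, hσ⟩ := hsat
  set K : ℕ → Fin 3 := fun j => if h : j < m then (hσ j h).choose else 0 with hKdef
  have hK : ∀ j, j < m → σ (C j (K j)).1 = (C j (K j)).2 := by
    intro j hj
    simp only [hKdef, dif_pos hj]
    exact (hσ j hj).choose_spec
  have hm : ∀ j, j < m →
      satF C (.v j, .vk j (K j)) = lit σ (C j (K j)).1 ∧ (C j (K j)).1 < n := by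
    intro j hj
    refine ⟨?_, hC j hj (K j)⟩
    show (if (C j (K j)).2 then Info.pos (C j (K j)).1 else Info.neg (C j (K j)).1) = _
    rw [← hK j hj]
    rfl
  refine ⟨vpath σ K m 0 n, ⟨vpath_chain n m σ K n 0 (by omega), ?_,
    vpath_head σ K m 0 n, vpath_last σ K m n 0⟩, ?_⟩
  · have hr := vpath_rank n m σ K n 0 (by omega)
    have h1 : List.Chain' (· < ·) ((vpath σ K m 0 n).map (rank n)) :=
      (List.isChain_map _).mpr hr
    have h2 := List.isChain_iff_pairwise.mp h1
    exact List.Nodup.of_map (rank n) (h2.imp Nat.ne_of_lt)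
  · show reuseLenAux satW (satF C) [] (edgesOf (vpath σ K m 0 n)) = n
    exact var_reuse n m C σ K hm n 0 [] (by omega) (fun _ _ h => by simp at h)
      (fun i' h => by omega)
end

section
/- Let a 3SAT instance with n variables and m clauses be given, and let G be the graph constructed from it as described, with source s = u_0 and sink t = v_m. If G contains a directed path from s to t whose reuse-length is at most n, then the 3SAT instance is satisfiable. -/
/-! ### Auxiliary development for the proof of Statement 2 -/

/-- The chosen middle vertex in variable gadget `i`. -/
def wv (b : ℕ → Bool) (i : ℕ) : Vert := if b i then .up i else .un i

/-- The canonical clause part of a path: from `v j` with `g` clause gadgets. -/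
def clPath (kf : ℕ → Fin 3) : ℕ → ℕ → List Vert
  | 0, j => [.v j]
  | g+1, j => .v j :: .vk j (kf j) :: clPath kf g (j+1)

/-- The canonical full path: from `u i` with `f` remaining variable gadgets,
then the clause part (for `m` clauses). -/
def fullPath (m : ℕ) (b : ℕ → Bool) (kf : ℕ → Fin 3) : ℕ → ℕ → List Vert
  | 0, i => .u i :: clPath kf m 0
  | f+1, i => .u i :: wv b i :: fullPath m b kf f (i+1)

lemma edgesOf_cons_cons {V : Type} (x y : V) (l : List V) :
    edgesOf (x :: y :: l) = (x, y) :: edgesOf (y :: l) := rfl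

lemma reuseLenAux_cons {E I : Type} [DecidableEq I] (w : E → ℕ) (f : E → I)
    (seen : List I) (e : E) (rest : List E) :
    reuseLenAux w f seen (e :: rest) =
      (if f e ∈ seen then 0 else w e) + reuseLenAux w f (f e :: seen) rest := rfl

lemma clPath_head (kf : ℕ → Fin 3) (g j : ℕ) :
    ∃ t, clPath kf g j = .v j :: t := by
  cases g <;> simp [clPath]

lemma clPath_congr (kf kf' : ℕ → Fin 3) :
    ∀ g j, (∀ d, d < g → kf (j + d) = kf' (j + d)) → clPath kf g j = clPath kf' g j := by
  intro g
  induction g with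
  | zero => intro j _; rfl
  | succ g ih =>
    intro j h
    have h0 : kf j = kf' j := by simpa using h 0 (Nat.succ_pos g)
    simp only [clPath, h0, List.cons.injEq, true_and]
    exact ih (j+1) fun d hd => by
      have := h (d+1) (by omega); rwa [show j + (d+1) = j + 1 + d by omega] at this

lemma fullPath_congr (m : ℕ) (b b' : ℕ → Bool) (kf : ℕ → Fin 3) :
    ∀ f i, (∀ d, d < f → b (i + d) = b' (i + d)) → fullPath m b kf f i = fullPath m b' kf f i := by
  intro f
  induction f with
  | zero => intro i _; rfl
  | succ f ih =>
    intro i h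
    have h0 : b i = b' i := by simpa using h 0 (Nat.succ_pos f)
    simp only [fullPath, wv, h0, List.cons.injEq, true_and]
    exact ih (i+1) fun d hd => by
      have := h (d+1) (by omega); rwa [show i + (d+1) = i + 1 + d by omega] at this

/-- Structure of any chain from `v j` to `v m` in the reduction graph. -/
lemma clStruct (n m : ℕ) : ∀ L (p : List Vert) (j : ℕ), p.length ≤ L → j ≤ m →
    p.Chain' (satAdj n m) → p.head? = some (.v j) → p.getLast? = some (.v m) →
    ∃ kf : ℕ → Fin 3, p = clPath kf (m - j) j := by
  intro L
  induction L with
  | zero =>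
    intro p j hL hj hch hh hl
    cases p with
    | nil => simp at hh
    | cons a q => simp at hL
  | succ L ih =>
    intro p j hL hj hch hh hl
    cases p with
    | nil => simp at hh
    | cons a q =>
      simp only [List.head?_cons, Option.some.injEq] at hh
      subst hh
      cases q with
      | nil =>
        simp only [List.getLast?_singleton, Option.some.injEq, Vert.v.injEq] at hl
        subst hl
        exact ⟨fun _ => 0, by simp [clPath]⟩
      | cons x q' =>
        rw [show List.Chain' _ _ = List.IsChain _ _ from rfl, List.isChain_cons_cons] at hch
        obtain ⟨hadj, hch⟩ := hch
        cases x with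
        | u i => simp [satAdj] at hadj
        | up i => simp [satAdj] at hadj
        | un i => simp [satAdj] at hadj
        | v j' => simp [satAdj] at hadj
        | vk j' k =>
          obtain ⟨heq, hjm⟩ : j' = j ∧ j < m := hadj
          obtain rfl : j = j' := heq.symm
          cases q' with
          | nil => simp at hl
          | cons y q'' =>
            rw [List.isChain_cons_cons] at hch
            obtain ⟨hadj2, hch⟩ := hch
            cases y with
            | u i => simp [satAdj] at hadj2
            | up i => simp [satAdj] at hadj2
            | un i => simp [satAdj] at hadj2
            | vk j'' k' => simp [satAdj] at hadj2
            | v j'' =>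
              obtain ⟨rfl, -⟩ : j'' = j + 1 ∧ j < m := hadj2
              simp only [List.length_cons] at hL
              obtain ⟨kf', hq⟩ := ih (.v (j+1) :: q'') (j+1) (by simp; omega)
                (by omega) hch (by simp)
                (by rw [List.getLast?_cons_cons, List.getLast?_cons_cons] at hl; exact hl)
              refine ⟨fun j'' => if j'' = j then k else kf' j'', ?_⟩
              rw [show m - j = (m - (j+1)) + 1 by omega]
              have h1 : (fun j'' => if j'' = j then k else kf' j'') j = k := if_pos rfl
              have h2 : clPath (fun j'' => if j'' = j then k else kf' j'') (m-(j+1)) (j+1) =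
                  clPath kf' (m-(j+1)) (j+1) :=
                clPath_congr _ _ _ _ (fun d hd => if_neg (by omega))
              rw [show clPath (fun j'' => if j'' = j then k else kf' j'') (m - (j+1) + 1) j =
                  .v j :: .vk j ((fun j'' => if j'' = j then k else kf' j'') j) ::
                    clPath (fun j'' => if j'' = j then k else kf' j'') (m-(j+1)) (j+1) from rfl,
                h1, h2, ← hq]

/-- Structure of any chain from `u i` to `v m` in the reduction graph. -/
lemma varStruct (n m : ℕ) : ∀ L (p : List Vert) (i : ℕ), p.length ≤ L → i ≤ n →
    p.Chain' (satAdj n m) → p.head? = some (.u i) → p.getLast? = some (.v m) →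
    ∃ (b : ℕ → Bool) (kf : ℕ → Fin 3), p = fullPath m b kf (n - i) i := by
  intro L
  induction L with
  | zero =>
    intro p i hL hi hch hh hl
    cases p with
    | nil => simp at hh
    | cons a q => simp at hL
  | succ L ih =>
    intro p i hL hi hch hh hl
    cases p with
    | nil => simp at hh
    | cons a q =>
      simp only [List.head?_cons, Option.some.injEq] at hh
      subst hh
      cases q with
      | nil => simp at hl
      | cons x q' =>
        rw [show List.Chain' _ _ = List.IsChain _ _ from rfl, List.isChain_cons_cons] at hch
        obtain ⟨hadj, hch⟩ := hch
        cases x with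
        | u i' => simp [satAdj] at hadj
        | vk j' k => simp [satAdj] at hadj
        | v j' =>
          obtain ⟨heq, rfl⟩ : i = n ∧ j' = 0 := hadj
          obtain rfl : n = i := heq.symm
          simp only [List.length_cons] at hL
          obtain ⟨kf, hq⟩ := clStruct n m L (.v 0 :: q') 0 (by simp; omega) (Nat.zero_le m)
            hch (by simp) (by rw [List.getLast?_cons_cons] at hl; exact hl)
          refine ⟨fun _ => true, kf, ?_⟩
          rw [Nat.sub_self]
          simp only [fullPath, List.cons.injEq, true_and]
          rw [hq, Nat.sub_zero]
        | up i' =>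
          obtain ⟨heq, hin⟩ : i' = i ∧ i < n := hadj
          obtain rfl : i = i' := heq.symm
          cases q' with
          | nil => simp at hl
          | cons y q'' =>
            rw [List.isChain_cons_cons] at hch
            obtain ⟨hadj2, hch⟩ := hch
            cases y with
            | up i'' => simp [satAdj] at hadj2
            | un i'' => simp [satAdj] at hadj2
            | v j'' => simp [satAdj] at hadj2
            | vk j'' k' => simp [satAdj] at hadj2
            | u i'' =>
              obtain ⟨rfl, -⟩ : i'' = i + 1 ∧ i < n := hadj2
              simp only [List.length_cons] at hL
              obtain ⟨b', kf, hq⟩ := ih (.u (i+1) :: q'') (i+1) (by simp; omega)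
                (by omega) hch (by simp)
                (by rw [List.getLast?_cons_cons, List.getLast?_cons_cons] at hl; exact hl)
              refine ⟨fun i'' => if i'' = i then true else b' i'', kf, ?_⟩
              rw [show n - i = (n - (i+1)) + 1 by omega]
              have h1 : wv (fun i'' => if i'' = i then true else b' i'') i = .up i := by
                simp [wv]
              have h2 : fullPath m (fun i'' => if i'' = i then true else b' i'') kf
                  (n-(i+1)) (i+1) = fullPath m b' kf (n-(i+1)) (i+1) :=
                fullPath_congr _ _ _ _ _ _ (fun d hd => if_neg (by omega))
              rw [show fullPath m (fun i'' => if i'' = i then true else b' i'') kf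
                    (n - (i+1) + 1) i =
                  .u i :: wv (fun i'' => if i'' = i then true else b' i'') i ::
                    fullPath m (fun i'' => if i'' = i then true else b' i'') kf
                      (n-(i+1)) (i+1) from rfl,
                h1, h2, ← hq]
        | un i' =>
          obtain ⟨heq, hin⟩ : i' = i ∧ i < n := hadj
          obtain rfl : i = i' := heq.symm
          cases q' with
          | nil => simp at hl
          | cons y q'' =>
            rw [List.isChain_cons_cons] at hch
            obtain ⟨hadj2, hch⟩ := hch
            cases y with
            | up i'' => simp [satAdj] at hadj2
            | un i'' => simp [satAdj] at hadj2
            | v j'' => simp [satAdj] at hadj2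
            | vk j'' k' => simp [satAdj] at hadj2
            | u i'' =>
              obtain ⟨rfl, -⟩ : i'' = i + 1 ∧ i < n := hadj2
              simp only [List.length_cons] at hL
              obtain ⟨b', kf, hq⟩ := ih (.u (i+1) :: q'') (i+1) (by simp; omega)
                (by omega) hch (by simp)
                (by rw [List.getLast?_cons_cons, List.getLast?_cons_cons] at hl; exact hl)
              refine ⟨fun i'' => if i'' = i then false else b' i'', kf, ?_⟩
              rw [show n - i = (n - (i+1)) + 1 by omega]
              have h1 : wv (fun i'' => if i'' = i then false else b' i'') i = .un i := by
                simp [wv]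
              have h2 : fullPath m (fun i'' => if i'' = i then false else b' i'') kf
                  (n-(i+1)) (i+1) = fullPath m b' kf (n-(i+1)) (i+1) :=
                fullPath_congr _ _ _ _ _ _ (fun d hd => if_neg (by omega))
              rw [show fullPath m (fun i'' => if i'' = i then false else b' i'') kf
                    (n - (i+1) + 1) i =
                  .u i :: wv (fun i'' => if i'' = i then false else b' i'') i ::
                    fullPath m (fun i'' => if i'' = i then false else b' i'') kf
                      (n-(i+1)) (i+1) from rfl,
                h1, h2, ← hq]

/-- Reuse-length computation along the variable part. -/
lemma ruVar (C : ℕ → Fin 3 → ℕ × Bool) (b : ℕ → Bool) (kf : ℕ → Fin 3) (m : ℕ) :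
    ∀ f i (S : List Info),
    (∀ d, i ≤ d → Info.pos d ∉ S ∧ Info.neg d ∉ S) →
    ∃ S' : List Info,
      (∀ d, (Info.pos d ∈ S' → Info.pos d ∈ S ∨ (b d = true ∧ d < i + f)) ∧
            (Info.neg d ∈ S' → Info.neg d ∈ S ∨ (b d = false ∧ d < i + f))) ∧
      reuseLenAux satW (satF C) S (edgesOf (fullPath m b kf f i)) =
        f + reuseLenAux satW (satF C) (Info.other (.u (i+f), .v 0) :: S')
              (edgesOf (clPath kf m 0)) := by
  intro f
  induction f with
  | zero =>
    intro i S hS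
    obtain ⟨t, ht⟩ := clPath_head kf m 0
    refine ⟨S, fun d => ⟨fun h => Or.inl h, fun h => Or.inl h⟩, ?_⟩
    rw [show fullPath m b kf 0 i = .u i :: clPath kf m 0 from rfl,
      ht, edgesOf_cons_cons, reuseLenAux_cons]
    have hw : satW (Vert.u i, Vert.v 0) = 0 := rfl
    have hf : satF C (Vert.u i, Vert.v 0) = Info.other (Vert.u i, Vert.v 0) := rfl
    rw [hw, hf, ite_self, ← ht]
    simp
  | succ f ih =>
    intro i S hS
    cases hb : b i with
    | true =>
      have hw1 : wv b i = .up i := by simp [wv, hb]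
      rw [show fullPath m b kf (f+1) i = .u i :: wv b i :: fullPath m b kf f (i+1) from rfl,
        hw1]
      obtain ⟨t, ht⟩ : ∃ t, fullPath m b kf f (i+1) = .u (i+1) :: t := by
        cases f <;> exact ⟨_, rfl⟩
      rw [ht, edgesOf_cons_cons, edgesOf_cons_cons, reuseLenAux_cons, reuseLenAux_cons]
      have hf1 : satF C (Vert.u i, Vert.up i) = Info.pos i := rfl
      have hf2 : satF C (Vert.up i, Vert.u (i+1)) = Info.other (Vert.up i, Vert.u (i+1)) := rfl
      have hw2 : satW (Vert.up i, Vert.u (i+1)) = 0 := rfl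
      rw [hf1, hf2, hw2, if_neg (hS i le_rfl).1, ite_self]
      set S2 : List Info := Info.other (Vert.up i, Vert.u (i+1)) :: Info.pos i :: S with hS2
      have hS2h : ∀ d, i + 1 ≤ d → Info.pos d ∉ S2 ∧ Info.neg d ∉ S2 := by
        intro d hd
        have := hS d (by omega)
        constructor
        · simp only [hS2, List.mem_cons]
          rintro (h | h | h)
          · exact absurd h (by simp)
          · exact absurd h (by simp; omega)
          · exact this.1 h
        · simp only [hS2, List.mem_cons]
          rintro (h | h | h)
          · exact absurd h (by simp)
          · exact absurd h (by simp)
          · exact this.2 h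
      obtain ⟨S', hS', hval⟩ := ih (i+1) S2 hS2h
      rw [← ht, hval]
      refine ⟨S', fun d => ⟨fun h => ?_, fun h => ?_⟩, ?_⟩
      · rcases (hS' d).1 h with h' | ⟨h1, h2⟩
        · simp only [hS2, List.mem_cons] at h'
          rcases h' with h' | h' | h'
          · exact absurd h' (by simp)
          · simp only [Info.pos.injEq] at h'
            exact Or.inr ⟨h' ▸ hb, by omega⟩
          · exact Or.inl h'
        · exact Or.inr ⟨h1, by omega⟩
      · rcases (hS' d).2 h with h' | ⟨h1, h2⟩
        · simp only [hS2, List.mem_cons] at h'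
          rcases h' with h' | h' | h'
          · exact absurd h' (by simp)
          · exact absurd h' (by simp)
          · exact Or.inl h'
        · exact Or.inr ⟨h1, by omega⟩
      · rw [show satW (Vert.u i, Vert.up i) = 1 from rfl,
          show i + 1 + f = i + (f + 1) by omega]
        ring
    | false =>
      have hw1 : wv b i = .un i := by simp [wv, hb]
      rw [show fullPath m b kf (f+1) i = .u i :: wv b i :: fullPath m b kf f (i+1) from rfl,
        hw1]
      obtain ⟨t, ht⟩ : ∃ t, fullPath m b kf f (i+1) = .u (i+1) :: t := by
        cases f <;> exact ⟨_, rfl⟩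
      rw [ht, edgesOf_cons_cons, edgesOf_cons_cons, reuseLenAux_cons, reuseLenAux_cons]
      have hf1 : satF C (Vert.u i, Vert.un i) = Info.neg i := rfl
      have hf2 : satF C (Vert.un i, Vert.u (i+1)) = Info.other (Vert.un i, Vert.u (i+1)) := rfl
      have hw2 : satW (Vert.un i, Vert.u (i+1)) = 0 := rfl
      rw [hf1, hf2, hw2, if_neg (hS i le_rfl).2, ite_self]
      set S2 : List Info := Info.other (Vert.un i, Vert.u (i+1)) :: Info.neg i :: S with hS2
      have hS2h : ∀ d, i + 1 ≤ d → Info.pos d ∉ S2 ∧ Info.neg d ∉ S2 := by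
        intro d hd
        have := hS d (by omega)
        constructor
        · simp only [hS2, List.mem_cons]
          rintro (h | h | h)
          · exact absurd h (by simp)
          · exact absurd h (by simp)
          · exact this.1 h
        · simp only [hS2, List.mem_cons]
          rintro (h | h | h)
          · exact absurd h (by simp)
          · exact absurd h (by simp; omega)
          · exact this.2 h
      obtain ⟨S', hS', hval⟩ := ih (i+1) S2 hS2h
      rw [← ht, hval]
      refine ⟨S', fun d => ⟨fun h => ?_, fun h => ?_⟩, ?_⟩
      · rcases (hS' d).1 h with h' | ⟨h1, h2⟩
        · simp only [hS2, List.mem_cons] at h'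
          rcases h' with h' | h' | h'
          · exact absurd h' (by simp)
          · exact absurd h' (by simp)
          · exact Or.inl h'
        · exact Or.inr ⟨h1, by omega⟩
      · rcases (hS' d).2 h with h' | ⟨h1, h2⟩
        · simp only [hS2, List.mem_cons] at h'
          rcases h' with h' | h' | h'
          · exact absurd h' (by simp)
          · simp only [Info.neg.injEq] at h'
            exact Or.inr ⟨h' ▸ hb, by omega⟩
          · exact Or.inl h'
        · exact Or.inr ⟨h1, by omega⟩
      · rw [show satW (Vert.u i, Vert.un i) = 1 from rfl,
          show i + 1 + f = i + (f + 1) by omega]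
        ring

lemma litInfo_ne_other (C : ℕ → Fin 3 → ℕ × Bool) (j j' : ℕ) (k : Fin 3) (e : Vert × Vert) :
    satF C (.v j, .vk j' k) ≠ Info.other e := by
  show (if (C j k).2 then Info.pos (C j k).1 else Info.neg (C j k).1) ≠ _
  split <;> simp

/-- Reuse-length zero along the clause part forces every clause info to be seen. -/
lemma ruCl (C : ℕ → Fin 3 → ℕ × Bool) (kf : ℕ → Fin 3) :
    ∀ g j (S : List Info),
    reuseLenAux satW (satF C) S (edgesOf (clPath kf g j)) = 0 →
    ∀ d, d < g → (satF C (.v (j+d), .vk (j+d) (kf (j+d))) ∈ S ∨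
      ∃ d' < d, satF C (.v (j+d), .vk (j+d) (kf (j+d))) =
        satF C (.v (j+d'), .vk (j+d') (kf (j+d')))) := by
  intro g
  induction g with
  | zero => intro j S h d hd; omega
  | succ g ih =>
    intro j S h d hd
    obtain ⟨t, ht⟩ := clPath_head kf g (j+1)
    rw [show clPath kf (g+1) j = .v j :: .vk j (kf j) :: clPath kf g (j+1) from rfl,
      ht, edgesOf_cons_cons, edgesOf_cons_cons, reuseLenAux_cons, reuseLenAux_cons] at h
    have hw2 : satW (Vert.vk j (kf j), Vert.v (j+1)) = 0 := rfl
    rw [hw2, ite_self] at h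
    have hw1 : satW (Vert.v j, Vert.vk j (kf j)) = 1 := rfl
    rw [hw1] at h
    have hmem : satF C (Vert.v j, Vert.vk j (kf j)) ∈ S := by
      by_contra hc
      rw [if_neg hc] at h
      omega
    rw [if_pos hmem] at h
    simp only [Nat.zero_add, Nat.add_eq_zero] at h
    have hrest : reuseLenAux satW (satF C)
        (satF C (Vert.vk j (kf j), Vert.v (j+1)) :: satF C (Vert.v j, Vert.vk j (kf j)) :: S)
        (edgesOf (clPath kf g (j+1))) = 0 := by
      rw [ht]; exact h
    cases d with
    | zero => exact Or.inl (by simpa using hmem)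
    | succ d =>
      have hd' : d < g := by omega
      have := ih (j+1) _ hrest d hd'
      have heq : j + (d+1) = (j+1) + d := by omega
      rw [heq]
      rcases this with hmem' | ⟨d', hd'', heq'⟩
      · rcases List.mem_cons.1 hmem' with h1 | hmem''
        · have hf2 : satF C (Vert.vk j (kf j), Vert.v (j+1)) =
            Info.other (Vert.vk j (kf j), Vert.v (j+1)) := rfl
          rw [hf2] at h1
          exact absurd h1 (litInfo_ne_other C _ _ _ _)
        rcases List.mem_cons.1 hmem'' with h1 | hmem'''
        · refine Or.inr ⟨0, by omega, ?_⟩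
          rw [show j + 0 = j from rfl]
          exact h1
        · exact Or.inl hmem'''
      · refine Or.inr ⟨d' + 1, by omega, ?_⟩
        rw [show j + (d'+1) = (j+1) + d' by omega]
        exact heq'


/-- If the reduction graph contains a directed path from `s = u_0`
to `t = v_m` of reuse-length at most `n`, then the 3SAT instance is satisfiable. -/
theorem stmt_2 (n m : ℕ) (C : ℕ → Fin 3 → ℕ × Bool)
    (hC : ∀ j < m, ∀ k : Fin 3, (C j k).1 < n)
    (p : List Vert) (hp : IsPath (satAdj n m) (.u 0) (.v m) p)
    (hr : reuseLen satW (satF C) (edgesOf p) ≤ n) :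
    Satisfiable m C := by
  obtain ⟨hch, hnd, hh, hl⟩ := hp
  obtain ⟨b, kf, hpeq⟩ := varStruct n m p.length p 0 le_rfl (Nat.zero_le n) hch hh hl
  subst hpeq
  obtain ⟨S', hS', hval⟩ := ruVar C b kf m (n - 0) 0 [] (by simp)
  rw [reuseLen, hval, Nat.sub_zero] at hr
  have hrest : reuseLenAux satW (satF C)
      (Info.other (.u (0 + n), .v 0) :: S') (edgesOf (clPath kf m 0)) = 0 := by omega
  have hcl := ruCl C kf m 0 _ hrest
  have key : ∀ j, j < m → b ((C j (kf j)).1) = (C j (kf j)).2 := by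
    intro j
    induction j using Nat.strong_induction_on with
    | _ j IH =>
      intro hj
      have hd := hcl j hj
      simp only [Nat.zero_add] at hd
      rcases hd with hmem | ⟨j', hj', heq⟩
      · rcases List.mem_cons.1 hmem with h1 | hmem'
        · exact absurd h1 (litInfo_ne_other C _ _ _ _)
        · cases hb2 : (C j (kf j)).2 with
          | true =>
            have : satF C (.v j, .vk j (kf j)) = Info.pos (C j (kf j)).1 := by
              show (if (C j (kf j)).2 then _ else _) = _
              rw [hb2, if_pos rfl]
            rw [this] at hmem'
            rcases (hS' _).1 hmem' with h | ⟨h, -⟩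
            · simp at h
            · exact h
          | false =>
            have : satF C (.v j, .vk j (kf j)) = Info.neg (C j (kf j)).1 := by
              show (if (C j (kf j)).2 then _ else _) = _
              rw [hb2, if_neg (by simp)]
            rw [this] at hmem'
            rcases (hS' _).2 hmem' with h | ⟨h, -⟩
            · simp at h
            · exact h
      · have hkey' := IH j' hj' (by omega)
        have e1 : satF C (.v j, .vk j (kf j)) =
            (if (C j (kf j)).2 then Info.pos (C j (kf j)).1 else Info.neg (C j (kf j)).1) := rfl
        have e2 : satF C (.v j', .vk j' (kf j')) =
            (if (C j' (kf j')).2 then Info.pos (C j' (kf j')).1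
              else Info.neg (C j' (kf j')).1) := rfl
        rw [e1, e2] at heq
        cases hb2 : (C j (kf j)).2 <;> cases hb2' : (C j' (kf j')).2 <;>
          simp [hb2, hb2'] at heq
        · rw [heq, hkey', hb2']
        · rw [heq, hkey', hb2']
  exact ⟨b, fun j hj => ⟨kf j, key j hj⟩⟩
end

section
/- Let a 3SAT instance with n variables and m clauses be given, and let G be the graph constructed from it as described, with source s = u_0 and sink t = v_m. Then every directed path from s to t in G has reuse-length at least n. -/
lemma key_lemma (n m : ℕ) (C : ℕ → Fin 3 → ℕ × Bool) :
    ∀ N (p : List Vert) (i : ℕ) (seen : List Info), p.length ≤ N → i ≤ n →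
    p.Chain' (satAdj n m) → p.head? = some (.u i) → p.getLast? = some (.v m) →
    (∀ i', i ≤ i' → Info.pos i' ∉ seen ∧ Info.neg i' ∉ seen) →
    n - i ≤ reuseLenAux satW (satF C) seen (edgesOf p) := by
  intro N
  induction N with
  | zero =>
    intro p i seen hlen _ _ hhead _ _
    have : p = [] := List.length_eq_zero_iff.mp (Nat.le_zero.mp hlen)
    subst this; simp at hhead
  | succ N ih =>
    intro p i seen hlen hin hchain hhead hlast hfresh
    match p with
    | [] => simp at hhead
    | [a] =>
      simp at hhead hlast
      rw [hhead] at hlast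
      exact absurd hlast (by simp)
    | a :: b :: rest =>
      simp only [List.head?_cons, Option.some.injEq] at hhead
      subst hhead
      rw [List.Chain', List.isChain_cons_cons] at hchain
      obtain ⟨hadj, hchain⟩ := hchain
      rw [List.getLast?_cons_cons] at hlast
      match b with
      | .u _ => exact absurd hadj (by simp [satAdj])
      | .vk _ _ => exact absurd hadj (by simp [satAdj])
      | .v j =>
        obtain ⟨rfl, rfl⟩ : i = n ∧ j = 0 := hadj
        simp
      | .up i' =>
        obtain ⟨he, hlt⟩ : i' = i ∧ i < n := hadj
        subst he
        match rest with
        | [] =>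
          simp at hlast
        | c :: rest' =>
          rw [List.isChain_cons_cons] at hchain
          obtain ⟨hadj2, hchain⟩ := hchain
          rw [List.getLast?_cons_cons] at hlast
          match c with
          | .up _ => exact absurd hadj2 (by simp [satAdj])
          | .un _ => exact absurd hadj2 (by simp [satAdj])
          | .v _ => exact absurd hadj2 (by simp [satAdj])
          | .vk _ _ => exact absurd hadj2 (by simp [satAdj])
          | .u i'' =>
            obtain ⟨he2, -⟩ : i'' = i' + 1 ∧ i' < n := hadj2
            subst he2
            have hrec := ih (Vert.u (i'+1) :: rest') (i'+1)
              (Info.other (.up i', .u (i'+1)) :: Info.pos i' :: seen)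
              (by simp at hlen ⊢; omega) (by omega)
              hchain (by simp) hlast
              (by
                intro i' hi'
                have := hfresh i' (by omega)
                simp_all [Info.other, Info.pos]
                omega)
            show n - i' ≤ reuseLenAux satW (satF C) seen
              ((Vert.u i', Vert.up i') :: (Vert.up i', Vert.u (i'+1)) ::
                edgesOf (Vert.u (i'+1) :: rest'))
            rw [reuseLenAux, reuseLenAux]
            have h1 : satF C (Vert.u i', Vert.up i') = Info.pos i' := rfl
            have h2 : satF C (Vert.up i', Vert.u (i'+1)) =
              Info.other (.up i', .u (i'+1)) := rfl
            rw [h1, h2]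
            rw [if_neg (hfresh i' le_rfl).1]
            have : satW (Vert.u i', Vert.up i') = 1 := rfl
            rw [this, show satW (Vert.up i', Vert.u (i'+1)) = 0 from rfl, ite_self]
            omega
      | .un i' =>
        obtain ⟨he, hlt⟩ : i' = i ∧ i < n := hadj
        subst he
        match rest with
        | [] =>
          simp at hlast
        | c :: rest' =>
          rw [List.isChain_cons_cons] at hchain
          obtain ⟨hadj2, hchain⟩ := hchain
          rw [List.getLast?_cons_cons] at hlast
          match c with
          | .up _ => exact absurd hadj2 (by simp [satAdj])
          | .un _ => exact absurd hadj2 (by simp [satAdj])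
          | .v _ => exact absurd hadj2 (by simp [satAdj])
          | .vk _ _ => exact absurd hadj2 (by simp [satAdj])
          | .u i'' =>
            obtain ⟨he2, -⟩ : i'' = i' + 1 ∧ i' < n := hadj2
            subst he2
            have hrec := ih (Vert.u (i'+1) :: rest') (i'+1)
              (Info.other (.un i', .u (i'+1)) :: Info.neg i' :: seen)
              (by simp at hlen ⊢; omega) (by omega)
              hchain (by simp) hlast
              (by
                intro i' hi'
                have := hfresh i' (by omega)
                simp_all [Info.other, Info.neg]
                omega)
            show n - i' ≤ reuseLenAux satW (satF C) seen
              ((Vert.u i', Vert.un i') :: (Vert.un i', Vert.u (i'+1)) ::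
                edgesOf (Vert.u (i'+1) :: rest'))
            rw [reuseLenAux, reuseLenAux]
            have h1 : satF C (Vert.u i', Vert.un i') = Info.neg i' := rfl
            have h2 : satF C (Vert.un i', Vert.u (i'+1)) =
              Info.other (.un i', .u (i'+1)) := rfl
            rw [h1, h2]
            rw [if_neg (hfresh i' le_rfl).2]
            have : satW (Vert.u i', Vert.un i') = 1 := rfl
            rw [this, show satW (Vert.un i', Vert.u (i'+1)) = 0 from rfl, ite_self]
            omega

/-- Every directed path from `s = u_0` to `t = v_m` in the reduction
graph has reuse-length at least `n`. -/
theorem stmt_3 (n m : ℕ) (C : ℕ → Fin 3 → ℕ × Bool)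
    (hC : ∀ j < m, ∀ k : Fin 3, (C j k).1 < n)
    (p : List Vert) (hp : IsPath (satAdj n m) (.u 0) (.v m) p) :
    n ≤ reuseLen satW (satF C) (edgesOf p) := by
  obtain ⟨hchain, -, hhead, hlast⟩ := hp
  have := key_lemma n m C p.length p 0 [] le_rfl (Nat.zero_le n) hchain hhead hlast
    (by simp)
  simpa [reuseLen] using this
end

section
/- Let a 3SAT instance with n variables and m clauses be given, and let G be the graph constructed from it as described. Then G is acyclic: there is a linear ordering of the vertices of G (namely u_0, u'_0/ū'_0, u_1, ..., u_n, v_0, v^0_0/v^1_0/v^2_0, v_1, ..., v_m) such that every edge of G goes from an earlier vertex to a strictly later vertex; in particular G contains no directed cycle. -/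
def satRank (n : ℕ) : Vert → ℕ
  | .u i => 2 * i
  | .up i => 2 * i + 1
  | .un i => 2 * i + 1
  | .v j => 2 * n + 1 + 2 * j
  | .vk j _ => 2 * n + 2 + 2 * j

lemma satRank_lt (n m : ℕ) {a b : Vert} (h : satAdj n m a b) :
    satRank n a < satRank n b := by
  cases a <;> cases b <;> simp_all [satAdj, satRank] <;> omega

lemma chain_rank {r : Vert → Vert → Prop} {rank : Vert → ℕ}
    (hr : ∀ a b, r a b → rank a < rank b) :
    ∀ (l : List Vert) (a b : Vert), List.Chain r a l → l.getLast? = some b →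
      rank a < rank b := by
  intro l
  induction l with
  | nil => intro a b h hb; simp at hb
  | cons c t ih =>
    intro a b h hb
    rw [List.Chain, List.chain_cons] at h
    obtain ⟨hac, hct⟩ := h
    rcases t with _ | ⟨d, t'⟩
    · simp at hb; subst hb; exact hr _ _ hac
    · exact (hr _ _ hac).trans (ih c b hct hb)

/-- The reduction graph is acyclic: there is a linear ordering of its
vertices (given by a rank function) such that every edge goes from an earlier vertex to
a strictly later one; in particular there is no directed cycle (no nonempty closed
chain from a vertex `a` back to itself). -/
theorem stmt_4 (n m : ℕ) :
    (∃ rank : Vert → ℕ, ∀ a b : Vert, satAdj n m a b → rank a < rank b) ∧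
    ∀ (a : Vert) (p : List Vert), ¬ List.Chain (satAdj n m) a (p ++ [a]) := by
  refine ⟨⟨satRank n, fun a b h => satRank_lt n m h⟩, ?_⟩
  intro a p h
  have := chain_rank (fun a b hab => satRank_lt n m hab) (p ++ [a]) a a h (by simp)
  omega
end

section
/- Let a 3SAT instance with n variables and m clauses be given, and let G be the graph constructed from it as described, with source s = u_0 and sink t = v_m. Then every directed path from s to t in G passes through all vertices u_0, ..., u_n and v_0, ..., v_m, and for each 0 ≤ i < n it passes through exactly one of the two vertices u'_i and ū'_i, and for each 0 ≤ j < m it passes through exactly one of the three vertices v^0_j, v^1_j, v^2_j. -/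
/-- Shape invariant for the clause part of a path. -/
def goodV (j : ℕ) : Vert → Prop
  | .v j' => j ≤ j'
  | .vk j' _ => j ≤ j'
  | _ => False

/-- Shape invariant for the variable part of a path. -/
def goodU (i : ℕ) : Vert → Prop
  | .u i' => i ≤ i'
  | .up i' => i ≤ i'
  | .un i' => i ≤ i'
  | _ => True

theorem goodV_mono {j j' : ℕ} (h : j ≤ j') {x : Vert} (hx : goodV j' x) : goodV j x := by
  cases x <;> simp [goodV] at hx ⊢ <;> omega

theorem goodU_mono {i i' : ℕ} (h : i ≤ i') {x : Vert} (hx : goodU i' x) : goodU i x := by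
  cases x <;> simp [goodU] at hx ⊢ <;> omega

theorem goodV_goodU {j i : ℕ} {x : Vert} (hx : goodV j x) : goodU i x := by
  cases x <;> simp [goodV, goodU] at hx ⊢

theorem lemV (n m : ℕ) : ∀ (p : List Vert) (j : ℕ),
    List.Chain' (satAdj n m) (.v j :: p) →
    (Vert.v j :: p).getLast? = some (.v m) →
    (∀ x ∈ Vert.v j :: p, goodV j x) ∧
    (∀ j', j ≤ j' → j' ≤ m → Vert.v j' ∈ Vert.v j :: p) ∧
    (∀ j', j ≤ j' → j' < m → ∃ k, Vert.vk j' k ∈ Vert.v j :: p ∧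
        ∀ k', Vert.vk j' k' ∈ Vert.v j :: p → k' = k)
  | [], j, hc, hl => by
      have hjm : j = m := by simpa using hl
      refine ⟨?_, ?_, ?_⟩
      · intro x hx
        simp at hx
        subst hx
        simp [goodV]
      · intro j' h1 h2
        have : j' = j := by omega
        subst this
        simp
      · intro j' h1 h2
        omega
  | [x], j, hc, hl => by
      have h1 : satAdj n m (.v j) x := (List.isChain_cons_cons.mp hc).1
      obtain a | a | a | a | ⟨a, k1⟩ := x <;> simp [satAdj] at h1
      simp at hl
  | x :: y :: r, j, hc, hl => by
      have h1 : satAdj n m (.v j) x := (List.isChain_cons_cons.mp hc).1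
      have hc1 : List.Chain' (satAdj n m) (x :: y :: r) := (List.isChain_cons_cons.mp hc).2
      obtain a | a | a | a | ⟨a, k1⟩ := x <;> simp [satAdj] at h1
      obtain ⟨ha, hjm⟩ := h1
      rw [ha] at hc1 hl ⊢
      have h2 : satAdj n m (.vk j k1) y := (List.isChain_cons_cons.mp hc1).1
      have hc2 : List.Chain' (satAdj n m) (y :: r) := (List.isChain_cons_cons.mp hc1).2
      obtain b | b | b | b | ⟨b, k2⟩ := y <;> simp [satAdj] at h2
      obtain ⟨hb, -⟩ := h2
      rw [hb] at hc2 hl ⊢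
      have hl' : (Vert.v (j + 1) :: r).getLast? = some (.v m) := by
        rwa [List.getLast?_cons_cons, List.getLast?_cons_cons] at hl
      obtain ⟨hshape, hvmem, hvkmem⟩ := lemV n m r (j + 1) hc2 hl'
      refine ⟨?_, ?_, ?_⟩
      · intro x hx
        rw [List.mem_cons, List.mem_cons] at hx
        rcases hx with rfl | rfl | hx
        · simp [goodV]
        · simp [goodV]
        · exact goodV_mono (Nat.le_succ j) (hshape _ hx)
      · intro j' hj1 hj2
        rcases Nat.eq_or_lt_of_le hj1 with h | h
        · simp [← h]
        · have := hvmem j' h hj2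
          simp only [List.mem_cons] at this ⊢
          tauto
      · intro j' hj1 hj2
        rcases Nat.eq_or_lt_of_le hj1 with h | h
        · subst h
          refine ⟨k1, by simp, ?_⟩
          intro k' hk'
          rw [List.mem_cons, List.mem_cons] at hk'
          rcases hk' with h | h | h
          · exact absurd h (by simp)
          · simp at h
            first
            | exact h
            | exact h.2
          · have := hshape _ h
            simp [goodV] at this
        · obtain ⟨k0, hk0, huniq⟩ := hvkmem j' h hj2
          refine ⟨k0, ?_, ?_⟩
          · simp only [List.mem_cons] at hk0 ⊢
            tauto
          · intro k' hk'
            rw [List.mem_cons, List.mem_cons] at hk'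
            rcases hk' with hh | hh | hh
            · exact absurd hh (by simp)
            · simp at hh
              exact absurd hh.1 (by omega)
            · exact huniq k' hh

theorem lemU (n m : ℕ) : ∀ (p : List Vert) (i : ℕ),
    List.Chain' (satAdj n m) (.u i :: p) →
    (Vert.u i :: p).getLast? = some (.v m) →
    (∀ x ∈ Vert.u i :: p, goodU i x) ∧
    (∀ i', i ≤ i' → i' ≤ n → Vert.u i' ∈ Vert.u i :: p) ∧
    (∀ i', i ≤ i' → i' < n →
        Xor' (Vert.up i' ∈ Vert.u i :: p) (Vert.un i' ∈ Vert.u i :: p)) ∧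
    (∀ j ≤ m, Vert.v j ∈ Vert.u i :: p) ∧
    (∀ j < m, ∃ k, Vert.vk j k ∈ Vert.u i :: p ∧
        ∀ k', Vert.vk j k' ∈ Vert.u i :: p → k' = k)
  | [], i, hc, hl => by simp at hl
  | [x], i, hc, hl => by
      have h1 : satAdj n m (.u i) x := (List.isChain_cons_cons.mp hc).1
      have hx : x = Vert.v m := by simpa using hl
      subst hx
      simp only [satAdj] at h1
      obtain ⟨hin, hm0⟩ := h1
      refine ⟨?_, ?_, ?_, ?_, ?_⟩
      · intro x hx
        simp at hx
        rcases hx with rfl | rfl <;> simp [goodU]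
      · intro i' ha hb
        have : i' = i := by omega
        subst this
        simp
      · intro i' ha hb
        omega
      · intro j hj
        have : j = m := by omega
        subst this
        simp
      · intro j hj
        omega
  | x :: y :: q, i, hc, hl => by
      have h1 : satAdj n m (.u i) x := (List.isChain_cons_cons.mp hc).1
      have hc1 : List.Chain' (satAdj n m) (x :: y :: q) := (List.isChain_cons_cons.mp hc).2
      have hl1 : (x :: y :: q).getLast? = some (.v m) := by
        rwa [List.getLast?_cons_cons] at hl
      obtain a | a | a | a | ⟨a, k1⟩ := x <;> simp [satAdj] at h1
      -- Case x = .up a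
      · obtain ⟨ha, hin⟩ := h1
        rw [ha] at hc1 hl1 ⊢
        have h2 : satAdj n m (.up i) y := (List.isChain_cons_cons.mp hc1).1
        have hc2 : List.Chain' (satAdj n m) (y :: q) := (List.isChain_cons_cons.mp hc1).2
        have hl2 : (y :: q).getLast? = some (.v m) := by
          rwa [List.getLast?_cons_cons] at hl1
        obtain b | b | b | b | ⟨b, k2⟩ := y <;> simp [satAdj] at h2
        obtain ⟨hb, -⟩ := h2
        rw [hb] at hc2 hl2 ⊢
        obtain ⟨hshape, humem, hxor, hvmem, hvkmem⟩ := lemU n m q (i + 1) hc2 hl2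
        refine ⟨?_, ?_, ?_, ?_, ?_⟩
        · intro x hx
          rw [List.mem_cons, List.mem_cons] at hx
          rcases hx with rfl | rfl | hx
          · simp [goodU]
          · simp [goodU]
          · exact goodU_mono (Nat.le_succ i) (hshape _ hx)
        · intro i' ha1 ha2
          rcases Nat.eq_or_lt_of_le ha1 with h | h
          · simp [← h]
          · have := humem i' h ha2
            simp only [List.mem_cons] at this ⊢
            tauto
        · intro i' ha1 ha2
          rcases Nat.eq_or_lt_of_le ha1 with h | h
          · subst h
            left
            refine ⟨by simp, ?_⟩
            intro hmem
            rw [List.mem_cons, List.mem_cons] at hmem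
            rcases hmem with h | h | h
            · exact absurd h (by simp)
            · exact absurd h (by simp)
            · have := hshape _ h
              simp [goodU] at this
          · have hx := hxor i' h ha2
            have e1 : (Vert.up i' ∈ Vert.u i :: Vert.up i :: Vert.u (i + 1) :: q) ↔
                (Vert.up i' ∈ Vert.u (i + 1) :: q) := by
              simp only [List.mem_cons]
              constructor
              · rintro (hh | hh | hh)
                · exact absurd hh (by simp)
                · exfalso
                  simp at hh
                  omega
                · exact hh
              · tauto
            have e2 : (Vert.un i' ∈ Vert.u i :: Vert.up i :: Vert.u (i + 1) :: q) ↔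
                (Vert.un i' ∈ Vert.u (i + 1) :: q) := by
              simp only [List.mem_cons]
              constructor
              · rintro (hh | hh | hh)
                · exact absurd hh (by simp)
                · exact absurd hh (by simp)
                · exact hh
              · tauto
            rw [e1, e2]
            exact hx
        · intro j hj
          have := hvmem j hj
          simp only [List.mem_cons] at this ⊢
          tauto
        · intro j hj
          obtain ⟨k0, hk0, huniq⟩ := hvkmem j hj
          refine ⟨k0, ?_, ?_⟩
          · simp only [List.mem_cons] at hk0 ⊢
            tauto
          · intro k' hk'
            rw [List.mem_cons, List.mem_cons] at hk'
            rcases hk' with hh | hh | hh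
            · exact absurd hh (by simp)
            · exact absurd hh (by simp)
            · exact huniq k' hh
      -- Case x = .un a
      · obtain ⟨ha, hin⟩ := h1
        rw [ha] at hc1 hl1 ⊢
        have h2 : satAdj n m (.un i) y := (List.isChain_cons_cons.mp hc1).1
        have hc2 : List.Chain' (satAdj n m) (y :: q) := (List.isChain_cons_cons.mp hc1).2
        have hl2 : (y :: q).getLast? = some (.v m) := by
          rwa [List.getLast?_cons_cons] at hl1
        obtain b | b | b | b | ⟨b, k2⟩ := y <;> simp [satAdj] at h2
        obtain ⟨hb, -⟩ := h2
        rw [hb] at hc2 hl2 ⊢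
        obtain ⟨hshape, humem, hxor, hvmem, hvkmem⟩ := lemU n m q (i + 1) hc2 hl2
        refine ⟨?_, ?_, ?_, ?_, ?_⟩
        · intro x hx
          rw [List.mem_cons, List.mem_cons] at hx
          rcases hx with rfl | rfl | hx
          · simp [goodU]
          · simp [goodU]
          · exact goodU_mono (Nat.le_succ i) (hshape _ hx)
        · intro i' ha1 ha2
          rcases Nat.eq_or_lt_of_le ha1 with h | h
          · simp [← h]
          · have := humem i' h ha2
            simp only [List.mem_cons] at this ⊢
            tauto
        · intro i' ha1 ha2
          rcases Nat.eq_or_lt_of_le ha1 with h | h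
          · subst h
            right
            refine ⟨by simp, ?_⟩
            intro hmem
            rw [List.mem_cons, List.mem_cons] at hmem
            rcases hmem with h | h | h
            · exact absurd h (by simp)
            · exact absurd h (by simp)
            · have := hshape _ h
              simp [goodU] at this
          · have hx := hxor i' h ha2
            have e1 : (Vert.up i' ∈ Vert.u i :: Vert.un i :: Vert.u (i + 1) :: q) ↔
                (Vert.up i' ∈ Vert.u (i + 1) :: q) := by
              simp only [List.mem_cons]
              constructor
              · rintro (hh | hh | hh)
                · exact absurd hh (by simp)
                · exact absurd hh (by simp)
                · exact hh
              · tauto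
            have e2 : (Vert.un i' ∈ Vert.u i :: Vert.un i :: Vert.u (i + 1) :: q) ↔
                (Vert.un i' ∈ Vert.u (i + 1) :: q) := by
              simp only [List.mem_cons]
              constructor
              · rintro (hh | hh | hh)
                · exact absurd hh (by simp)
                · exfalso
                  simp at hh
                  omega
                · exact hh
              · tauto
            rw [e1, e2]
            exact hx
        · intro j hj
          have := hvmem j hj
          simp only [List.mem_cons] at this ⊢
          tauto
        · intro j hj
          obtain ⟨k0, hk0, huniq⟩ := hvkmem j hj
          refine ⟨k0, ?_, ?_⟩
          · simp only [List.mem_cons] at hk0 ⊢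
            tauto
          · intro k' hk'
            rw [List.mem_cons, List.mem_cons] at hk'
            rcases hk' with hh | hh | hh
            · exact absurd hh (by simp)
            · exact absurd hh (by simp)
            · exact huniq k' hh
      -- Case x = .v a
      · obtain ⟨hin, ha⟩ := h1
        rw [ha] at hc1 hl1 ⊢
        obtain ⟨hshape, hvmem, hvkmem⟩ := lemV n m (y :: q) 0 hc1 hl1
        refine ⟨?_, ?_, ?_, ?_, ?_⟩
        · intro x hx
          rw [List.mem_cons] at hx
          rcases hx with rfl | hx
          · simp [goodU]
          · exact goodV_goodU (hshape _ hx)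
        · intro i' ha1 ha2
          have : i' = i := by omega
          subst this
          simp
        · intro i' ha1 ha2
          omega
        · intro j hj
          have := hvmem j (Nat.zero_le j) hj
          simp only [List.mem_cons] at this ⊢
          tauto
        · intro j hj
          obtain ⟨k0, hk0, huniq⟩ := hvkmem j (Nat.zero_le j) hj
          refine ⟨k0, ?_, ?_⟩
          · simp only [List.mem_cons] at hk0 ⊢
            tauto
          · intro k' hk'
            rw [List.mem_cons] at hk'
            rcases hk' with hh | hh
            · exact absurd hh (by simp)
            · exact huniq k' hh

/-- Every directed path from `s = u_0` to `t = v_m` in the reduction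
graph passes through all vertices `u_0, …, u_n` and `v_0, …, v_m`, through exactly one
of the two vertices `u'_i, ū'_i` for each `i < n`, and through exactly one of the three
vertices `v^0_j, v^1_j, v^2_j` for each `j < m`. -/
theorem stmt_6 (n m : ℕ) (p : List Vert)
    (hp : IsPath (satAdj n m) (.u 0) (.v m) p) :
    (∀ i ≤ n, Vert.u i ∈ p) ∧ (∀ j ≤ m, Vert.v j ∈ p) ∧
    (∀ i < n, Xor' (Vert.up i ∈ p) (Vert.un i ∈ p)) ∧
    (∀ j < m, ∃! k : Fin 3, Vert.vk j k ∈ p) := by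
  obtain ⟨hc, -, hh, hl⟩ := hp
  match p, hh with
  | x :: q, hh =>
    have hx : x = Vert.u 0 := by simpa using hh
    subst hx
    obtain ⟨-, humem, hxor, hvmem, hvkmem⟩ := lemU n m q 0 hc hl
    refine ⟨fun i hi => humem i (Nat.zero_le i) hi, hvmem, fun i hi => hxor i (Nat.zero_le i) hi,
      fun j hj => ?_⟩
    obtain ⟨k0, hk0, huniq⟩ := hvkmem j hj
    exact ⟨k0, hk0, huniq⟩
end

section
/- Let a 3SAT instance with n variables and m clauses be given, let G be the graph constructed from it as described with source s = u_0 and sink t = v_m, and let U be any directed path from s to t in G. Then the ordinary length of U (the sum of the weights of its edges, counted with multiplicity) is exactly n + m: U contains exactly n + m edges of weight 1 (one in each variable gadget and one in each clause gadget) and all its other edges have weight 0. -/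
lemma satW01 : ∀ e : Vert × Vert, satW e = 0 ∨ satW e = 1 := by
  rintro ⟨a, b⟩
  cases a <;> cases b <;> first | exact Or.inl rfl | exact Or.inr rfl

lemma sum_eq_filter (l : List (Vert × Vert)) :
    (l.map satW).sum = (l.filter fun e => satW e = 1).length := by
  induction l with
  | nil => simp
  | cons a l ih =>
    rcases satW01 a with h | h <;> simp [List.filter_cons, h, ih] <;> omega

lemma edgesOf_cons₂ (a b : Vert) (l : List Vert) :
    edgesOf (a :: b :: l) = (a, b) :: edgesOf (b :: l) := rfl

lemma edgesOf_single (a : Vert) : edgesOf [a] = [] := rfl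

theorem clausePart (n m : ℕ) :
    ∀ (p : List Vert) (j : ℕ), p.Chain' (satAdj n m) →
    p.head? = some (.v j) → p.getLast? = some (.v m) →
    j ≤ m ∧ ((edgesOf p).filter fun e => satW e = 1).length = m - j ∧
    (∀ i, ((edgesOf p).filter fun e => satW e = 1 ∧ e.1 = Vert.u i).length = 0) ∧
    (∀ j' < m, ((edgesOf p).filter fun e => satW e = 1 ∧ e.1 = Vert.v j').length
      = if j ≤ j' then 1 else 0)
  | [], j, _, hh, _ => by simp at hh
  | [a], j, _, hh, hl => by
    simp at hh hl
    subst hh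
    cases hl
    refine ⟨le_refl m, by simp [edgesOf_single], fun i => by simp [edgesOf_single],
      fun j' hj' => ?_⟩
    have : ¬ (m ≤ j') := by omega
    simp [edgesOf_single, this]
  | [a, b], j, hc, hh, hl => by
    simp at hh; subst hh
    simp only [List.Chain'] at hc; rw [List.isChain_cons_cons] at hc
    obtain ⟨hab, -⟩ := hc
    cases b with
    | u i => exact absurd hab (by simp [satAdj])
    | up i => exact absurd hab (by simp [satAdj])
    | un i => exact absurd hab (by simp [satAdj])
    | v j' => exact absurd hab (by simp [satAdj])
    | vk j' k => simp at hl
  | a :: b :: c :: rest, j, hc, hh, hl => by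
    simp at hh; subst hh
    simp only [List.Chain'] at hc; rw [List.isChain_cons_cons] at hc
    obtain ⟨hab, hc⟩ := hc
    cases b with
    | u i => exact absurd hab (by simp [satAdj])
    | up i => exact absurd hab (by simp [satAdj])
    | un i => exact absurd hab (by simp [satAdj])
    | v j' => exact absurd hab (by simp [satAdj])
    | vk j' k =>
      obtain ⟨rfl, hjm⟩ : j' = j ∧ j < m := hab
      rw [List.isChain_cons_cons] at hc
      obtain ⟨hbc, hc⟩ := hc
      cases c with
      | u i => exact absurd hbc (by simp [satAdj])
      | up i => exact absurd hbc (by simp [satAdj])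
      | un i => exact absurd hbc (by simp [satAdj])
      | vk j'' k' => exact absurd hbc (by simp [satAdj])
      | v j'' =>
        obtain ⟨rfl, -⟩ : j'' = j' + 1 ∧ j' < m := hbc
        have hl' : (Vert.v (j'+1) :: rest).getLast? = some (.v m) := by
          rwa [List.getLast?_cons_cons, List.getLast?_cons_cons] at hl
        obtain ⟨h1, h2, h3, h4⟩ :=
          clausePart n m (Vert.v (j'+1) :: rest) (j' + 1) hc rfl hl'
        refine ⟨by omega, ?_, fun i => ?_, fun j₀ hj₀ => ?_⟩
        · rw [edgesOf_cons₂, edgesOf_cons₂,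
            List.filter_cons_of_pos (by simp [satW]),
            List.filter_cons_of_neg (by simp [satW]),
            List.length_cons, h2]
          omega
        · rw [edgesOf_cons₂, edgesOf_cons₂,
            List.filter_cons_of_neg (by simp [satW]),
            List.filter_cons_of_neg (by simp [satW])]
          exact h3 i
        · by_cases hjj : j₀ = j'
          · subst hjj
            rw [edgesOf_cons₂, edgesOf_cons₂,
              List.filter_cons_of_pos (by simp [satW]),
              List.filter_cons_of_neg (by simp [satW]),
              List.length_cons, h4 j₀ hj₀]
            split_ifs <;> omega
          · rw [edgesOf_cons₂, edgesOf_cons₂,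
              List.filter_cons_of_neg
                (by simp [satW]; exact fun h => hjj h.symm),
              List.filter_cons_of_neg (by simp [satW]),
              h4 j₀ hj₀]
            split_ifs <;> omega
  termination_by p _ _ _ _ => p.length
  decreasing_by simp

theorem varPart (n m : ℕ) :
    ∀ (p : List Vert) (i : ℕ), p.Chain' (satAdj n m) →
    p.head? = some (.u i) → p.getLast? = some (.v m) →
    i ≤ n ∧ ((edgesOf p).filter fun e => satW e = 1).length = (n - i) + m ∧
    (∀ i' < n, ((edgesOf p).filter fun e => satW e = 1 ∧ e.1 = Vert.u i').length
      = if i ≤ i' then 1 else 0) ∧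
    (∀ j < m, ((edgesOf p).filter fun e => satW e = 1 ∧ e.1 = Vert.v j).length = 1)
  | [], i, _, hh, _ => by simp at hh
  | [a], i, _, hh, hl => by
    simp at hh hl; subst hh; cases hl
  | [a, b], i, hc, hh, hl => by
    simp at hh; subst hh
    simp only [List.Chain'] at hc; rw [List.isChain_cons_cons] at hc
    obtain ⟨hab, -⟩ := hc
    have hl0 : [b].getLast? = some (Vert.v m) := by
      rwa [List.getLast?_cons_cons] at hl
    cases b with
    | u i' => exact absurd hab (by simp [satAdj])
    | vk j k => exact absurd hab (by simp [satAdj])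
    | up i' => simp at hl0
    | un i' => simp at hl0
    | v j =>
      obtain ⟨rfl, rfl⟩ : i = n ∧ j = 0 := hab
      obtain ⟨-, h2, h3, h4⟩ :=
        clausePart i m [Vert.v 0] 0 (List.isChain_singleton _) rfl hl0
      refine ⟨le_refl i, ?_, fun i' hi' => ?_, fun j₀ hj₀ => ?_⟩
      · rw [edgesOf_cons₂, List.filter_cons_of_neg (by simp [satW]), h2]
        omega
      · rw [edgesOf_cons₂, List.filter_cons_of_neg (by simp [satW]), h3 i']
        have : ¬ (i ≤ i') := by omega
        simp [this]
      · rw [edgesOf_cons₂, List.filter_cons_of_neg (by simp [satW]), h4 j₀ hj₀]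
        simp
  | a :: b :: c :: rest, i, hc, hh, hl => by
    simp at hh; subst hh
    simp only [List.Chain'] at hc; rw [List.isChain_cons_cons] at hc
    obtain ⟨hab, hc⟩ := hc
    have hl0 : (b :: c :: rest).getLast? = some (.v m) := by
      rwa [List.getLast?_cons_cons] at hl
    cases b with
    | u i' => exact absurd hab (by simp [satAdj])
    | vk j k => exact absurd hab (by simp [satAdj])
    | v j =>
      obtain ⟨rfl, rfl⟩ : i = n ∧ j = 0 := hab
      obtain ⟨-, h2, h3, h4⟩ := clausePart i m (Vert.v 0 :: c :: rest) 0 hc rfl hl0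
      refine ⟨le_refl i, ?_, fun i' hi' => ?_, fun j₀ hj₀ => ?_⟩
      · rw [edgesOf_cons₂, List.filter_cons_of_neg (by simp [satW]), h2]
        omega
      · rw [edgesOf_cons₂, List.filter_cons_of_neg (by simp [satW]), h3 i']
        have : ¬ (i ≤ i') := by omega
        simp [this]
      · rw [edgesOf_cons₂, List.filter_cons_of_neg (by simp [satW]), h4 j₀ hj₀]
        simp
    | up i' =>
      obtain ⟨rfl, hin⟩ : i' = i ∧ i < n := hab
      rw [List.isChain_cons_cons] at hc
      obtain ⟨hbc, hc⟩ := hc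
      cases c with
      | up i'' => exact absurd hbc (by simp [satAdj])
      | un i'' => exact absurd hbc (by simp [satAdj])
      | v j => exact absurd hbc (by simp [satAdj])
      | vk j k => exact absurd hbc (by simp [satAdj])
      | u i'' =>
        obtain ⟨rfl, -⟩ : i'' = i' + 1 ∧ i' < n := hbc
        have hl' : (Vert.u (i'+1) :: rest).getLast? = some (.v m) := by
          rwa [List.getLast?_cons_cons] at hl0
        obtain ⟨h1, h2, h3, h4⟩ :=
          varPart n m (Vert.u (i'+1) :: rest) (i' + 1) hc rfl hl'
        refine ⟨by omega, ?_, fun i₀ hi₀ => ?_, fun j₀ hj₀ => ?_⟩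
        · rw [edgesOf_cons₂, edgesOf_cons₂,
            List.filter_cons_of_pos (by simp [satW]),
            List.filter_cons_of_neg (by simp [satW]),
            List.length_cons, h2]
          omega
        · by_cases hii : i₀ = i'
          · subst hii
            rw [edgesOf_cons₂, edgesOf_cons₂,
              List.filter_cons_of_pos (by simp [satW]),
              List.filter_cons_of_neg (by simp [satW]),
              List.length_cons, h3 i₀ hi₀]
            split_ifs <;> omega
          · rw [edgesOf_cons₂, edgesOf_cons₂,
              List.filter_cons_of_neg
                (by simp [satW]; exact fun h => hii h.symm),
              List.filter_cons_of_neg (by simp [satW]),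
              h3 i₀ hi₀]
            split_ifs <;> omega
        · rw [edgesOf_cons₂, edgesOf_cons₂,
            List.filter_cons_of_neg (by simp [satW]),
            List.filter_cons_of_neg (by simp [satW])]
          exact h4 j₀ hj₀
    | un i' =>
      obtain ⟨rfl, hin⟩ : i' = i ∧ i < n := hab
      rw [List.isChain_cons_cons] at hc
      obtain ⟨hbc, hc⟩ := hc
      cases c with
      | up i'' => exact absurd hbc (by simp [satAdj])
      | un i'' => exact absurd hbc (by simp [satAdj])
      | v j => exact absurd hbc (by simp [satAdj])
      | vk j k => exact absurd hbc (by simp [satAdj])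
      | u i'' =>
        obtain ⟨rfl, -⟩ : i'' = i' + 1 ∧ i' < n := hbc
        have hl' : (Vert.u (i'+1) :: rest).getLast? = some (.v m) := by
          rwa [List.getLast?_cons_cons] at hl0
        obtain ⟨h1, h2, h3, h4⟩ :=
          varPart n m (Vert.u (i'+1) :: rest) (i' + 1) hc rfl hl'
        refine ⟨by omega, ?_, fun i₀ hi₀ => ?_, fun j₀ hj₀ => ?_⟩
        · rw [edgesOf_cons₂, edgesOf_cons₂,
            List.filter_cons_of_pos (by simp [satW]),
            List.filter_cons_of_neg (by simp [satW]),
            List.length_cons, h2]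
          omega
        · by_cases hii : i₀ = i'
          · subst hii
            rw [edgesOf_cons₂, edgesOf_cons₂,
              List.filter_cons_of_pos (by simp [satW]),
              List.filter_cons_of_neg (by simp [satW]),
              List.length_cons, h3 i₀ hi₀]
            split_ifs <;> omega
          · rw [edgesOf_cons₂, edgesOf_cons₂,
              List.filter_cons_of_neg
                (by simp [satW]; exact fun h => hii h.symm),
              List.filter_cons_of_neg (by simp [satW]),
              h3 i₀ hi₀]
            split_ifs <;> omega
        · rw [edgesOf_cons₂, edgesOf_cons₂,
            List.filter_cons_of_neg (by simp [satW]),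
            List.filter_cons_of_neg (by simp [satW])]
          exact h4 j₀ hj₀
  termination_by p _ _ _ _ => p.length
  decreasing_by all_goals simp

/-- Every directed path `U` from `s = u_0` to `t = v_m` in the
reduction graph has ordinary length (sum of edge weights, with multiplicity) exactly
`n + m`: it contains exactly `n + m` edges of weight 1 — exactly one in each variable
gadget (leaving `u_i`) and exactly one in each clause gadget (leaving `v_j`) — and all
its other edges have weight 0. -/
theorem stmt_13 (n m : ℕ) (p : List Vert)
    (hp : IsPath (satAdj n m) (.u 0) (.v m) p) :
    ((edgesOf p).map satW).sum = n + m ∧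
    ((edgesOf p).filter fun e => satW e = 1).length = n + m ∧
    (∀ i < n, ((edgesOf p).filter fun e => satW e = 1 ∧ e.1 = Vert.u i).length = 1) ∧
    (∀ j < m, ((edgesOf p).filter fun e => satW e = 1 ∧ e.1 = Vert.v j).length = 1) ∧
    ∀ e ∈ edgesOf p, satW e = 0 ∨ satW e = 1 := by
  obtain ⟨hc, -, hh, hl⟩ := hp
  obtain ⟨-, h2, h3, h4⟩ := varPart n m p 0 hc hh hl
  refine ⟨by rw [sum_eq_filter]; omega, by omega,
    fun i hi => by simpa using h3 i hi, h4, fun e _ => satW01 e⟩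
end
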